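/- arXiv:2210.14937 — 6 statements merged into one kernel-verified Lean document; each statement's English description precedes it below -/
import Mathlib

section
/- Let N be a natural number and let a : Fin N → Fin N → ℝ be antisymmetric, i.e. a i j = − a j i for all i, j. Then ∑_{i} ( ∑_{j ≠ i} a i j )² = 2 ∑_{i<j} (a i j)² − 2 ∑_{i<j<k} ( a i j · a j k + a i j · a k i + a k i · a j k ). -/
open Finset

set_option maxHeartbeats 1000000

/-- For an antisymmetric array `a : Fin N → Fin N → ℝ`,
`∑ i (∑_{j ≠ i} a i j)² = 2 ∑_{i<j} (a i j)² − 2 ∑_{i<j<k} (a i j a j k + a i j a k i + a k i a j k)`. -/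
theorem stmt_1 (N : ℕ) (a : Fin N → Fin N → ℝ)
    (ha : ∀ i j : Fin N, a i j = - a j i) :
    ∑ i : Fin N, (∑ j ∈ univ.filter (fun j => j ≠ i), a i j) ^ 2 =
      2 * ∑ i : Fin N, ∑ j ∈ univ.filter (fun j => i < j), (a i j) ^ 2
      - 2 * ∑ i : Fin N, ∑ j ∈ univ.filter (fun j => i < j),
          ∑ k ∈ univ.filter (fun k => j < k),
            (a i j * a j k + a i j * a k i + a k i * a j k) := by
  have ha0 : ∀ i, a i i = 0 := fun i => by have := ha i i; linarith
  set P : Fin N → Fin N → Fin N → ℝ :=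
    fun i j k => a i j * a j k + a i j * a k i + a k i * a j k with hP
  -- full symmetry of P
  have Pswap : ∀ i j k, P j i k = P i j k := by
    intro i j k; simp only [hP]; rw [ha j i, ha i k, ha k j]; ring
  have Pswap2 : ∀ i j k, P i k j = P i j k := by
    intro i j k; simp only [hP]; rw [ha i k, ha k j, ha j i]; ring
  have Pc1 : ∀ i j k, P k i j = P i j k := fun i j k => (Pswap i k j).trans (Pswap2 i j k)
  have Pc2 : ∀ i j k, P j k i = P i j k := fun i j k => (Pswap2 j i k).trans (Pswap i j k)
  have Pc3 : ∀ i j k, P k j i = P i j k := fun i j k => (Pswap j k i).trans (Pc2 i j k)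
  -- degenerate values of P
  have Pdeg1 : ∀ i k, P i i k = -(a i k)^2 := by
    intro i k; simp only [hP]; rw [ha0 i, ha k i]; ring
  have Pdeg2 : ∀ i j, P i j j = -(a i j)^2 := by
    intro i j; simp only [hP]; rw [ha0 j, ha j i]; ring
  have Pdeg3 : ∀ i j, P i j i = -(a i j)^2 := by
    intro i j; simp only [hP]; rw [ha0 i, ha j i]; ring
  -- LHS reduction: LHS = -C with C the full cube sum of a i j * a j k
  have hL : ∑ i : Fin N, (∑ j ∈ univ.filter (fun j => j ≠ i), a i j) ^ 2
      = -∑ i : Fin N, ∑ j : Fin N, ∑ k : Fin N, a i j * a j k := by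
    have h1 : ∀ i : Fin N, ∑ j ∈ univ.filter (fun j => j ≠ i), a i j = ∑ j, a i j := by
      intro i; rw [Finset.sum_filter]
      refine Finset.sum_congr rfl fun j _ => ?_
      by_cases h : j = i
      · simp [h, ha0]
      · simp [h]
    calc ∑ i : Fin N, (∑ j ∈ univ.filter (fun j => j ≠ i), a i j) ^ 2
        = ∑ i : Fin N, ∑ j : Fin N, ∑ k : Fin N, a i j * a i k := by
          refine Finset.sum_congr rfl fun i _ => ?_
          rw [h1 i, sq, Finset.sum_mul_sum]
      _ = ∑ i : Fin N, ∑ j : Fin N, ∑ k : Fin N, -(a k i * a i j) := by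
          refine sum_congr rfl fun i _ => sum_congr rfl fun j _ => sum_congr rfl fun k _ => ?_
          rw [ha i k]; ring
      _ = -∑ i : Fin N, ∑ j : Fin N, ∑ k : Fin N, a k i * a i j := by
          simp only [Finset.sum_neg_distrib]
      _ = -∑ i : Fin N, ∑ k : Fin N, ∑ j : Fin N, a k i * a i j := by
          congr 1; exact Finset.sum_congr rfl fun i _ => Finset.sum_comm
      _ = -∑ k : Fin N, ∑ i : Fin N, ∑ j : Fin N, a k i * a i j := by
          congr 1; exact Finset.sum_comm
  -- full cube sum of P equals 3C
  have hCall1 : (∑ i : Fin N, ∑ j : Fin N, ∑ k : Fin N, P i j k)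
      = 3 * ∑ i : Fin N, ∑ j : Fin N, ∑ k : Fin N, a i j * a j k := by
    have t2 : (∑ i : Fin N, ∑ j : Fin N, ∑ k : Fin N, a i j * a k i)
        = ∑ i : Fin N, ∑ j : Fin N, ∑ k : Fin N, a i j * a j k := by
      calc (∑ i : Fin N, ∑ j : Fin N, ∑ k : Fin N, a i j * a k i)
          = ∑ i : Fin N, ∑ k : Fin N, ∑ j : Fin N, a i j * a k i :=
            Finset.sum_congr rfl fun i _ => Finset.sum_comm
        _ = ∑ k : Fin N, ∑ i : Fin N, ∑ j : Fin N, a i j * a k i := Finset.sum_comm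
        _ = ∑ k : Fin N, ∑ i : Fin N, ∑ j : Fin N, a k i * a i j :=
            sum_congr rfl fun k _ => sum_congr rfl fun i _ => sum_congr rfl fun j _ => mul_comm _ _
    have t3 : (∑ i : Fin N, ∑ j : Fin N, ∑ k : Fin N, a k i * a j k)
        = ∑ i : Fin N, ∑ j : Fin N, ∑ k : Fin N, a i j * a j k := by
      calc (∑ i : Fin N, ∑ j : Fin N, ∑ k : Fin N, a k i * a j k)
          = ∑ j : Fin N, ∑ i : Fin N, ∑ k : Fin N, a k i * a j k := Finset.sum_comm
        _ = ∑ j : Fin N, ∑ k : Fin N, ∑ i : Fin N, a k i * a j k :=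
            sum_congr rfl fun j _ => Finset.sum_comm
        _ = ∑ j : Fin N, ∑ k : Fin N, ∑ i : Fin N, a j k * a k i :=
            sum_congr rfl fun j _ => sum_congr rfl fun k _ => sum_congr rfl fun i _ => mul_comm _ _
    simp only [hP, Finset.sum_add_distrib]
    rw [t2, t3]; ring
  -- pointwise decomposition of P into the 9 regions of the cube
  have decomp : ∀ i j k : Fin N, P i j k =
      (if i < j ∧ j < k then P i j k else 0) + (if i < k ∧ k < j then P i j k else 0)
    + (if j < i ∧ i < k then P i j k else 0) + (if j < k ∧ k < i then P i j k else 0)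
    + (if k < i ∧ i < j then P i j k else 0) + (if k < j ∧ j < i then P i j k else 0)
    + (if i = j then P i j k else 0) + (if j = k ∧ i ≠ j then P i j k else 0)
    + (if i = k ∧ i ≠ j then P i j k else 0) := by
    intro i j k
    simp only [Fin.lt_def, ← Fin.val_eq_val, ne_eq]
    split_ifs <;> first | (exfalso; omega) | ring
  -- the five non-identity strict regions all equal the increasing-region sum
  have hR2 : (∑ i : Fin N, ∑ j : Fin N, ∑ k : Fin N, if i < k ∧ k < j then P i j k else 0)
      = ∑ i : Fin N, ∑ j : Fin N, ∑ k : Fin N, if i < j ∧ j < k then P i j k else 0 := by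
    calc (∑ i : Fin N, ∑ j : Fin N, ∑ k : Fin N, if i < k ∧ k < j then P i j k else 0)
        = ∑ i : Fin N, ∑ j : Fin N, ∑ k : Fin N, if i < j ∧ j < k then P i k j else 0 :=
          sum_congr rfl fun i _ => Finset.sum_comm
      _ = ∑ i : Fin N, ∑ j : Fin N, ∑ k : Fin N, if i < j ∧ j < k then P i j k else 0 := by
          refine sum_congr rfl fun i _ => sum_congr rfl fun j _ => sum_congr rfl fun k _ => ?_
          by_cases h : i < j ∧ j < k
          · simp only [h, if_true]; exact Pswap2 i j k
          · simp [h]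
  have hR3 : (∑ i : Fin N, ∑ j : Fin N, ∑ k : Fin N, if j < i ∧ i < k then P i j k else 0)
      = ∑ i : Fin N, ∑ j : Fin N, ∑ k : Fin N, if i < j ∧ j < k then P i j k else 0 := by
    calc (∑ i : Fin N, ∑ j : Fin N, ∑ k : Fin N, if j < i ∧ i < k then P i j k else 0)
        = ∑ i : Fin N, ∑ j : Fin N, ∑ k : Fin N, if i < j ∧ j < k then P j i k else 0 :=
          Finset.sum_comm
      _ = ∑ i : Fin N, ∑ j : Fin N, ∑ k : Fin N, if i < j ∧ j < k then P i j k else 0 := by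
          refine sum_congr rfl fun i _ => sum_congr rfl fun j _ => sum_congr rfl fun k _ => ?_
          by_cases h : i < j ∧ j < k
          · simp only [h, if_true]; exact Pswap i j k
          · simp [h]
  have hR4 : (∑ i : Fin N, ∑ j : Fin N, ∑ k : Fin N, if j < k ∧ k < i then P i j k else 0)
      = ∑ i : Fin N, ∑ j : Fin N, ∑ k : Fin N, if i < j ∧ j < k then P i j k else 0 := by
    calc (∑ i : Fin N, ∑ j : Fin N, ∑ k : Fin N, if j < k ∧ k < i then P i j k else 0)
        = ∑ i : Fin N, ∑ j : Fin N, ∑ k : Fin N, if i < k ∧ k < j then P j i k else 0 :=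
          Finset.sum_comm
      _ = ∑ i : Fin N, ∑ j : Fin N, ∑ k : Fin N, if i < j ∧ j < k then P k i j else 0 :=
          sum_congr rfl fun i _ => Finset.sum_comm
      _ = ∑ i : Fin N, ∑ j : Fin N, ∑ k : Fin N, if i < j ∧ j < k then P i j k else 0 := by
          refine sum_congr rfl fun i _ => sum_congr rfl fun j _ => sum_congr rfl fun k _ => ?_
          by_cases h : i < j ∧ j < k
          · simp only [h, if_true]; exact Pc1 i j k
          · simp [h]
  have hR5 : (∑ i : Fin N, ∑ j : Fin N, ∑ k : Fin N, if k < i ∧ i < j then P i j k else 0)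
      = ∑ i : Fin N, ∑ j : Fin N, ∑ k : Fin N, if i < j ∧ j < k then P i j k else 0 := by
    calc (∑ i : Fin N, ∑ j : Fin N, ∑ k : Fin N, if k < i ∧ i < j then P i j k else 0)
        = ∑ i : Fin N, ∑ j : Fin N, ∑ k : Fin N, if j < i ∧ i < k then P i k j else 0 :=
          sum_congr rfl fun i _ => Finset.sum_comm
      _ = ∑ i : Fin N, ∑ j : Fin N, ∑ k : Fin N, if i < j ∧ j < k then P j k i else 0 :=
          Finset.sum_comm
      _ = ∑ i : Fin N, ∑ j : Fin N, ∑ k : Fin N, if i < j ∧ j < k then P i j k else 0 := by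
          refine sum_congr rfl fun i _ => sum_congr rfl fun j _ => sum_congr rfl fun k _ => ?_
          by_cases h : i < j ∧ j < k
          · simp only [h, if_true]; exact Pc2 i j k
          · simp [h]
  have hR6 : (∑ i : Fin N, ∑ j : Fin N, ∑ k : Fin N, if k < j ∧ j < i then P i j k else 0)
      = ∑ i : Fin N, ∑ j : Fin N, ∑ k : Fin N, if i < j ∧ j < k then P i j k else 0 := by
    calc (∑ i : Fin N, ∑ j : Fin N, ∑ k : Fin N, if k < j ∧ j < i then P i j k else 0)
        = ∑ i : Fin N, ∑ j : Fin N, ∑ k : Fin N, if k < i ∧ i < j then P j i k else 0 :=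
          Finset.sum_comm
      _ = ∑ i : Fin N, ∑ j : Fin N, ∑ k : Fin N, if j < i ∧ i < k then P k i j else 0 :=
          sum_congr rfl fun i _ => Finset.sum_comm
      _ = ∑ i : Fin N, ∑ j : Fin N, ∑ k : Fin N, if i < j ∧ j < k then P k j i else 0 :=
          Finset.sum_comm
      _ = ∑ i : Fin N, ∑ j : Fin N, ∑ k : Fin N, if i < j ∧ j < k then P i j k else 0 := by
          refine sum_congr rfl fun i _ => sum_congr rfl fun j _ => sum_congr rfl fun k _ => ?_
          by_cases h : i < j ∧ j < k
          · simp only [h, if_true]; exact Pc3 i j k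
          · simp [h]
  -- degenerate regions each sum to -D
  have hE1 : (∑ i : Fin N, ∑ j : Fin N, ∑ k : Fin N, if i = j then P i j k else 0)
      = -∑ i : Fin N, ∑ j : Fin N, (a i j)^2 := by
    calc (∑ i : Fin N, ∑ j : Fin N, ∑ k : Fin N, if i = j then P i j k else 0)
        = ∑ i : Fin N, ∑ j : Fin N, (if i = j then ∑ k : Fin N, P i j k else 0) := by
          refine sum_congr rfl fun i _ => sum_congr rfl fun j _ => ?_
          split <;> simp
      _ = ∑ i : Fin N, ∑ k : Fin N, P i i k := by
          refine sum_congr rfl fun i _ => ?_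
          rw [Finset.sum_ite_eq]; simp
      _ = ∑ i : Fin N, ∑ k : Fin N, -(a i k)^2 :=
          sum_congr rfl fun i _ => sum_congr rfl fun k _ => Pdeg1 i k
      _ = -∑ i : Fin N, ∑ j : Fin N, (a i j)^2 := by simp only [Finset.sum_neg_distrib]
  have hE2 : (∑ i : Fin N, ∑ j : Fin N, ∑ k : Fin N, if j = k ∧ i ≠ j then P i j k else 0)
      = -∑ i : Fin N, ∑ j : Fin N, (a i j)^2 := by
    calc (∑ i : Fin N, ∑ j : Fin N, ∑ k : Fin N, if j = k ∧ i ≠ j then P i j k else 0)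
        = ∑ i : Fin N, ∑ j : Fin N, -(a i j)^2 := by
          refine sum_congr rfl fun i _ => sum_congr rfl fun j _ => ?_
          simp only [ite_and, Finset.sum_ite_eq, mem_univ, if_true]
          by_cases h : i = j
          · simp [h, ha0]
          · simp [h, Pdeg2]
      _ = -∑ i : Fin N, ∑ j : Fin N, (a i j)^2 := by simp only [Finset.sum_neg_distrib]
  have hE3 : (∑ i : Fin N, ∑ j : Fin N, ∑ k : Fin N, if i = k ∧ i ≠ j then P i j k else 0)
      = -∑ i : Fin N, ∑ j : Fin N, (a i j)^2 := by
    calc (∑ i : Fin N, ∑ j : Fin N, ∑ k : Fin N, if i = k ∧ i ≠ j then P i j k else 0)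
        = ∑ i : Fin N, ∑ j : Fin N, -(a i j)^2 := by
          refine sum_congr rfl fun i _ => sum_congr rfl fun j _ => ?_
          simp only [ite_and, Finset.sum_ite_eq, mem_univ, if_true]
          by_cases h : i = j
          · simp [h, ha0]
          · simp [h, Pdeg3]
      _ = -∑ i : Fin N, ∑ j : Fin N, (a i j)^2 := by simp only [Finset.sum_neg_distrib]
  -- full cube sum of P equals 6 * Sind - 3 * D
  have hCall2 : (∑ i : Fin N, ∑ j : Fin N, ∑ k : Fin N, P i j k)
      = 6 * (∑ i : Fin N, ∑ j : Fin N, ∑ k : Fin N, if i < j ∧ j < k then P i j k else 0)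
        - 3 * ∑ i : Fin N, ∑ j : Fin N, (a i j)^2 := by
    calc (∑ i : Fin N, ∑ j : Fin N, ∑ k : Fin N, P i j k)
        = ∑ i : Fin N, ∑ j : Fin N, ∑ k : Fin N,
            ((if i < j ∧ j < k then P i j k else 0) + (if i < k ∧ k < j then P i j k else 0)
          + (if j < i ∧ i < k then P i j k else 0) + (if j < k ∧ k < i then P i j k else 0)
          + (if k < i ∧ i < j then P i j k else 0) + (if k < j ∧ j < i then P i j k else 0)
          + (if i = j then P i j k else 0) + (if j = k ∧ i ≠ j then P i j k else 0)
          + (if i = k ∧ i ≠ j then P i j k else 0)) :=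
          sum_congr rfl fun i _ => sum_congr rfl fun j _ => sum_congr rfl fun k _ => decomp i j k
      _ = (∑ i : Fin N, ∑ j : Fin N, ∑ k : Fin N, if i < j ∧ j < k then P i j k else 0)
          + (∑ i : Fin N, ∑ j : Fin N, ∑ k : Fin N, if i < k ∧ k < j then P i j k else 0)
          + (∑ i : Fin N, ∑ j : Fin N, ∑ k : Fin N, if j < i ∧ i < k then P i j k else 0)
          + (∑ i : Fin N, ∑ j : Fin N, ∑ k : Fin N, if j < k ∧ k < i then P i j k else 0)
          + (∑ i : Fin N, ∑ j : Fin N, ∑ k : Fin N, if k < i ∧ i < j then P i j k else 0)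
          + (∑ i : Fin N, ∑ j : Fin N, ∑ k : Fin N, if k < j ∧ j < i then P i j k else 0)
          + (∑ i : Fin N, ∑ j : Fin N, ∑ k : Fin N, if i = j then P i j k else 0)
          + (∑ i : Fin N, ∑ j : Fin N, ∑ k : Fin N, if j = k ∧ i ≠ j then P i j k else 0)
          + (∑ i : Fin N, ∑ j : Fin N, ∑ k : Fin N, if i = k ∧ i ≠ j then P i j k else 0) := by
          simp only [Finset.sum_add_distrib]
      _ = 6 * (∑ i : Fin N, ∑ j : Fin N, ∑ k : Fin N, if i < j ∧ j < k then P i j k else 0)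
          - 3 * ∑ i : Fin N, ∑ j : Fin N, (a i j)^2 := by
          rw [hR2, hR3, hR4, hR5, hR6, hE1, hE2, hE3]; ring
  -- D = 2 * (strict upper-triangular sum of squares)
  have hX : (∑ i : Fin N, ∑ j : Fin N, (a i j)^2)
      = 2 * ∑ i : Fin N, ∑ j ∈ univ.filter (fun j => i < j), (a i j)^2 := by
    have point : ∀ i j : Fin N, (a i j)^2
        = (if i < j then (a i j)^2 else 0) + (if j < i then (a i j)^2 else 0) := by
      intro i j
      rcases lt_trichotomy i j with h|h|h
      · simp [h, asymm h]
      · subst h; simp [ha0, lt_irrefl]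
      · simp [h, asymm h]
    have hswap : (∑ i : Fin N, ∑ j : Fin N, if j < i then (a i j)^2 else 0)
        = ∑ i : Fin N, ∑ j : Fin N, if i < j then (a i j)^2 else 0 := by
      calc (∑ i : Fin N, ∑ j : Fin N, if j < i then (a i j)^2 else 0)
          = ∑ i : Fin N, ∑ j : Fin N, if i < j then (a j i)^2 else 0 := Finset.sum_comm
        _ = ∑ i : Fin N, ∑ j : Fin N, if i < j then (a i j)^2 else 0 := by
            refine sum_congr rfl fun i _ => sum_congr rfl fun j _ => ?_
            have : (a j i)^2 = (a i j)^2 := by rw [ha j i]; ring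
            rw [this]
    calc (∑ i : Fin N, ∑ j : Fin N, (a i j)^2)
        = ∑ i : Fin N, ∑ j : Fin N,
            ((if i < j then (a i j)^2 else 0) + (if j < i then (a i j)^2 else 0)) :=
          sum_congr rfl fun i _ => sum_congr rfl fun j _ => point i j
      _ = (∑ i : Fin N, ∑ j : Fin N, if i < j then (a i j)^2 else 0)
          + ∑ i : Fin N, ∑ j : Fin N, if j < i then (a i j)^2 else 0 := by
          simp only [Finset.sum_add_distrib]
      _ = 2 * ∑ i : Fin N, ∑ j ∈ univ.filter (fun j => i < j), (a i j)^2 := by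
          rw [hswap]; simp only [Finset.sum_filter]; ring
  -- the filtered triple sum in the goal equals Sind
  have hY : (∑ i : Fin N, ∑ j ∈ univ.filter (fun j => i < j),
        ∑ k ∈ univ.filter (fun k => j < k),
          (a i j * a j k + a i j * a k i + a k i * a j k))
      = ∑ i : Fin N, ∑ j : Fin N, ∑ k : Fin N, if i < j ∧ j < k then P i j k else 0 := by
    simp only [Finset.sum_filter]
    refine sum_congr rfl fun i _ => sum_congr rfl fun j _ => ?_
    by_cases h : i < j
    · simp only [h, if_true, ite_and]; rfl
    · simp [h]
  rw [hL, hY]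
  linarith [hCall1, hCall2, hX]
end

section
/- Let ħ, m > 0, let ω : ℝ → ℝ be differentiable with ω(t) > 0 for all t, let η, C, D : ℝ → ℝ be arbitrary functions and n : ℝ → ℝ differentiable. Define Λ(t,x) := − m ω(t) x² / (2ħ). Suppose that for all t ∈ ℝ and all x ∈ ℝ: η(t)·∂²Λ/∂x² + 2η(t)·(∂Λ/∂x)² + (2mC(t)/ħ)·( x·∂Λ/∂x + 1/2 ) + (2m²D(t)/ħ²)·∂Λ/∂x − (2m/ħ)·∂Λ/∂t = − ṅ(t). Then for every t: C(t) = η(t)ω(t) + ω̇(t)/(2ω(t)), D(t) = 0, and ṅ(t) = − m ω̇(t) / (2ħ ω(t)). -/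
/-! The Gaussian amplitude turns the consistency condition into a quadratic polynomial identity in
`x`, holding for all `x`. Its coefficients therefore vanish: the `x` coefficient forces `D = 0`, the
`x²` coefficient gives `C`, and the constant term then gives `ṅ`. -/

theorem eq_zero_of_forall_add_mul_add_mul_sq_eq_zero {K : Type*} [Field K] [CharZero K]
    {a b c : K} (h : ∀ x, a + b * x + c * x ^ 2 = 0) : a = 0 ∧ b = 0 ∧ c = 0 := by
  have h0 := h 0
  have h1 := h 1
  have h2 := h (-1)
  have ha : a = 0 := by simpa using h0
  have hc : c = 0 := by
    have : (2 : K) * c = 0 := by linear_combination h1 + h2 - 2 * h0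
    simpa using this
  exact ⟨ha, by linear_combination h1 - h0 - hc, hc⟩

section ScaledSquare

variable {𝕜 : Type*} [NontriviallyNormedField 𝕜] (a : 𝕜)

theorem deriv_const_mul_sq (x : 𝕜) : deriv (fun y => a * y ^ 2) x = 2 * a * x := by
  simp only [deriv_const_mul_field, deriv_pow_field]
  ring

theorem deriv_deriv_const_mul_sq (x : 𝕜) : deriv (deriv fun y => a * y ^ 2) x = 2 * a := by
  simp only [funext (deriv_const_mul_sq a), deriv_const_mul_id]

end ScaledSquare

theorem stmt_6_general (hbar m : ℝ) (hhbar : 0 < hbar) (hm : 0 < m)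
    (ω : ℝ → ℝ) (hωpos : ∀ t, 0 < ω t)
    (η C D : ℝ → ℝ) (n : ℝ → ℝ)
    (Λ : ℝ → ℝ → ℝ) (hΛ : ∀ t x, Λ t x = - m * ω t * x ^ 2 / (2 * hbar))
    (hcond : ∀ t x : ℝ,
      η t * deriv (deriv (fun y => Λ t y)) x
        + 2 * η t * (deriv (fun y => Λ t y) x) ^ 2
        + (2 * m * C t / hbar) * (x * deriv (fun y => Λ t y) x + 1 / 2)
        + (2 * m ^ 2 * D t / hbar ^ 2) * deriv (fun y => Λ t y) x
        - (2 * m / hbar) * deriv (fun s => Λ s x) t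
      = - deriv n t) :
    ∀ t : ℝ, C t = η t * ω t + deriv ω t / (2 * ω t) ∧ D t = 0 ∧
      deriv n t = - m * deriv ω t / (2 * hbar * ω t) := by
  intro t
  have hωt := hωpos t
  have hspace : (fun y => Λ t y) = fun y => (-m * ω t / (2 * hbar)) * y ^ 2 :=
    funext fun y => by rw [hΛ]; ring
  have htime : ∀ x, (fun s => Λ s x) = fun s => (-m * x ^ 2 / (2 * hbar)) * ω s :=
    fun x => funext fun s => by rw [hΛ]; ring
  have hpoly : ∀ x : ℝ, (m * C t / hbar - m * η t * ω t / hbar + deriv n t)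
      + (-2 * m ^ 3 * D t * ω t / hbar ^ 3) * x
      + (m ^ 2 / hbar ^ 2 * (2 * η t * ω t ^ 2 - 2 * C t * ω t + deriv ω t)) * x ^ 2 = 0 := by
    intro x
    have hx := hcond t x
    rw [hspace, htime, deriv_deriv_const_mul_sq, deriv_const_mul_sq, deriv_const_mul_field] at hx
    field_simp at hx ⊢
    linear_combination hx
  obtain ⟨hconst, hlin, hquad⟩ := eq_zero_of_forall_add_mul_add_mul_sq_eq_zero hpoly
  have hD : D t = 0 := by simpa [hm.ne', hωt.ne', hhbar.ne'] using hlin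
  have hC : 2 * η t * ω t ^ 2 - 2 * C t * ω t + deriv ω t = 0 := by
    simpa [hm.ne', hhbar.ne'] using hquad
  refine ⟨?_, hD, ?_⟩
  · field_simp
    linear_combination -hC
  · field_simp at hconst ⊢
    linear_combination m * hC + 2 * ω t * hconst

/-- One-body consistency condition for the harmonic trap: if
`Λ(t,x) = −mω(t)x²/(2ħ)` satisfies
`η ∂²ₓΛ + 2η (∂ₓΛ)² + (2mC/ħ)(x ∂ₓΛ + 1/2) + (2m²D/ħ²) ∂ₓΛ − (2m/ħ) ∂ₜΛ = −ṅ`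
for all `t, x`, then `C = ηω + ω̇/(2ω)`, `D = 0` and `ṅ = −mω̇/(2ħω)`. -/
theorem stmt_6 (hbar m : ℝ) (hhbar : 0 < hbar) (hm : 0 < m)
    (ω : ℝ → ℝ) (hω : Differentiable ℝ ω) (hωpos : ∀ t, 0 < ω t)
    (η C D : ℝ → ℝ) (n : ℝ → ℝ) (hn : Differentiable ℝ n)
    (Λ : ℝ → ℝ → ℝ) (hΛ : ∀ t x, Λ t x = - m * ω t * x ^ 2 / (2 * hbar))
    (hcond : ∀ t x : ℝ,
      η t * deriv (deriv (fun y => Λ t y)) x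
        + 2 * η t * (deriv (fun y => Λ t y) x) ^ 2
        + (2 * m * C t / hbar) * (x * deriv (fun y => Λ t y) x + 1 / 2)
        + (2 * m ^ 2 * D t / hbar ^ 2) * deriv (fun y => Λ t y) x
        - (2 * m / hbar) * deriv (fun s => Λ s x) t
      = - deriv n t) :
    ∀ t : ℝ, C t = η t * ω t + deriv ω t / (2 * ω t) ∧ D t = 0 ∧
      deriv n t = - m * deriv ω t / (2 * hbar * ω t) :=
  stmt_6_general hbar m hhbar hm ω hωpos η C D n Λ hΛ hcond
end

section
/- Let m, ħ > 0, let λ : ℝ → ℝ be differentiable and let η, C, n : ℝ → ℝ be arbitrary functions. Suppose that for all t ∈ ℝ and all x ≠ 0: − η(t)λ(t)/x² + 2η(t)λ(t)²/x² + (m/ħ)·λ̇(t)·ln|x| − (m/ħ)·C(t)·λ(t) = n(t). Then for every t one has λ̇(t) = 0 and η(t)·λ(t)·(2λ(t) − 1) = 0. In particular λ is a constant λ₀, and if λ₀ ∉ {0, 1/2} then η(t) = 0 for all t. -/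
lemma aux_alg (a k c nt u : ℝ) (hu : 1 < u)
    (e1 : a - c = nt) (e2 : a + k*u - c*u = nt*u)
    (e3 : a + 2*k*u^2 - c*u^2 = nt*u^2) : a = 0 ∧ k = 0 := by
  have g2 : a + k*u = a*u := by linear_combination e2 - u*e1
  have g3 : a + 2*k*u^2 = a*u^2 := by linear_combination e3 - u^2*e1
  have ha : a * (u-1)^2 = 0 := by linear_combination g3 - 2*u*g2
  have ha0 : a = 0 := by
    rcases mul_eq_zero.mp ha with h | h
    · exact h
    · exact absurd h (pow_ne_zero _ (by linarith))
  refine ⟨ha0, ?_⟩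
  rw [ha0] at g2
  simp at g2
  rcases g2 with h | h
  · exact h
  · linarith

/-- Two-body consistency condition for the Calogero–Sutherland pair function
`Γ(x,t) = λ(t) ln|x|`: if for all `t` and all `x ≠ 0`
`−ηλ/x² + 2ηλ²/x² + (m/ħ) λ̇ ln|x| − (m/ħ) C λ = n(t)`,
then `λ̇ ≡ 0` and `η λ (2λ − 1) ≡ 0`; in particular `λ` is a constant `λ₀`, and if
`λ₀ ∉ {0, 1/2}` then `η ≡ 0`. -/
theorem stmt_7 (m hbar : ℝ) (hm : 0 < m) (hhbar : 0 < hbar)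
    (lam : ℝ → ℝ) (hlam : Differentiable ℝ lam)
    (η C n : ℝ → ℝ)
    (hcond : ∀ t : ℝ, ∀ x : ℝ, x ≠ 0 →
      - η t * lam t / x ^ 2 + 2 * η t * (lam t) ^ 2 / x ^ 2
        + (m / hbar) * deriv lam t * Real.log |x|
        - (m / hbar) * C t * lam t = n t) :
    (∀ t, deriv lam t = 0 ∧ η t * lam t * (2 * lam t - 1) = 0) ∧
    ∃ lam₀ : ℝ, (∀ t, lam t = lam₀) ∧
      ((lam₀ ≠ 0 ∧ lam₀ ≠ 1 / 2) → ∀ t, η t = 0) := by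
  have key : ∀ t, deriv lam t = 0 ∧ η t * lam t * (2 * lam t - 1) = 0 := by
    intro t
    have he : (0:ℝ) < Real.exp 1 := Real.exp_pos 1
    have he2 : (0:ℝ) < Real.exp 2 := Real.exp_pos 2
    set u : ℝ := Real.exp 2 with hu
    have hu1 : 1 < u := by
      rw [hu]
      calc (1:ℝ) = Real.exp 0 := (Real.exp_zero).symm
        _ < Real.exp 2 := Real.exp_lt_exp.mpr (by norm_num)
    have hune : u ≠ 0 := ne_of_gt he2
    -- x = 1
    have h1 := hcond t 1 one_ne_zero
    simp only [abs_one, Real.log_one, one_pow, div_one, mul_zero] at h1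
    -- x = exp 1
    have h2 := hcond t (Real.exp 1) (ne_of_gt he)
    rw [abs_of_pos he, Real.log_exp] at h2
    have hsq : (Real.exp 1) ^ 2 = u := by
      rw [hu, ← Real.exp_nat_mul]; norm_num
    rw [hsq] at h2
    -- x = exp 2
    have h3 := hcond t u (ne_of_gt he2)
    rw [abs_of_pos he2, hu, Real.log_exp] at h3
    have hu2 : (Real.exp 2) ^ 2 = u ^ 2 := by rw [hu]
    rw [hu2] at h3
    have hune2 : u ^ 2 ≠ 0 := pow_ne_zero _ hune
    -- clean equations
    have e1 : (- η t * lam t + 2 * η t * (lam t)^2) - (m / hbar) * C t * lam t = n t := by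
      linear_combination h1
    have e2 : (- η t * lam t + 2 * η t * (lam t)^2) + ((m / hbar) * deriv lam t) * u
        - ((m / hbar) * C t * lam t) * u = n t * u := by
      rw [← h2]
      field_simp
    have e3 : (- η t * lam t + 2 * η t * (lam t)^2) + 2 * ((m / hbar) * deriv lam t) * u ^ 2
        - ((m / hbar) * C t * lam t) * u ^ 2 = n t * u ^ 2 := by
      rw [← h3]
      field_simp
    obtain ⟨ha0, hk0⟩ := aux_alg _ _ _ _ _ hu1 e1 e2 e3
    have hmh : (0:ℝ) < m / hbar := div_pos hm hhbar
    have hderiv : deriv lam t = 0 := by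
      rcases mul_eq_zero.mp hk0 with h | h
      · exact absurd h (ne_of_gt hmh)
      · exact h
    exact ⟨hderiv, by linear_combination ha0⟩
  refine ⟨key, lam 0, ?_, ?_⟩
  · intro t
    exact is_const_of_deriv_eq_zero hlam (fun x => (key x).1) t 0
  · rintro ⟨h0, hhalf⟩ t
    have h := (key t).2
    have hl : lam t = lam 0 := is_const_of_deriv_eq_zero hlam (fun x => (key x).1) t 0
    rw [hl] at h
    rcases mul_eq_zero.mp h with h' | h'
    · rcases mul_eq_zero.mp h' with h'' | h''
      · exact h''
      · exact absurd h'' h0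
    · exact absurd (by linarith) hhalf
end

section
/- Let N ≥ 1 be a natural number and λ ≥ 0 a real number. Define M := ∫_{ℝ^N} ∏_{i<j} |x_i − x_j|^{2λ} · exp(− ∑_k x_k²) dx, which is finite. Then for every complex number z with Re z > 0, the integral ∫_{ℝ^N} ∏_{i<j} |x_i − x_j|^{2λ} · exp(− z ∑_k x_k²) dx converges and equals z^{ −(N + λN(N−1))/2 } · M, where z^w denotes the principal branch of the complex power. -/
open Finset MeasureTheory

namespace Stmt8

noncomputable def Phi (N : ℕ) (lam : ℝ) (x : Fin N → ℝ) : ℝ :=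
  ∏ i : Fin N, ∏ j ∈ univ.filter (fun j => i < j), |x i - x j| ^ (2 * lam)

noncomputable def Q (N : ℕ) (x : Fin N → ℝ) : ℝ := ∑ k, (x k) ^ 2

lemma Phi_nonneg (N : ℕ) (lam : ℝ) (x : Fin N → ℝ) : 0 ≤ Phi N lam x :=
  Finset.prod_nonneg fun _ _ => Finset.prod_nonneg fun _ _ =>
    Real.rpow_nonneg (abs_nonneg _) _

lemma Q_nonneg (N : ℕ) (x : Fin N → ℝ) : 0 ≤ Q N x :=
  Finset.sum_nonneg fun _ _ => sq_nonneg _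

lemma continuous_Phi (N : ℕ) {lam : ℝ} (hlam : 0 ≤ lam) : Continuous (Phi N lam) := by
  apply continuous_finset_prod; intro i _
  apply continuous_finset_prod; intro j _
  have h1 : Continuous (fun x : Fin N → ℝ => |x i - x j|) :=
    ((continuous_apply i).sub (continuous_apply j)).abs
  have h2 : Continuous (fun a : ℝ => a ^ (2 * lam)) := by
    rw [continuous_iff_continuousAt]
    intro a
    exact Real.continuousAt_rpow_const a _ (Or.inr (by positivity))
  exact h2.comp h1

lemma continuous_Q (N : ℕ) : Continuous (Q N) :=
  continuous_finset_sum _ fun k _ => ((continuous_apply k).pow 2)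

lemma rpow_le_exp {a s : ℝ} (ha : 0 ≤ a) (hs : 0 ≤ s) : a ^ s ≤ Real.exp (s * a) := by
  rcases eq_or_lt_of_le ha with rfl | ha'
  · rcases eq_or_lt_of_le hs with rfl | hs'
    · simp
    · rw [Real.zero_rpow hs'.ne']
      positivity
  · rw [Real.rpow_def_of_pos ha']
    apply Real.exp_le_exp.2
    have := Real.log_le_sub_one_of_pos ha'
    nlinarith [Real.log_le_sub_one_of_pos ha']

lemma rpow_le_exp' {a s c : ℝ} (ha : 0 ≤ a) (hs : 0 ≤ s) (hc : 0 < c) :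
    a ^ s ≤ (c⁻¹) ^ s * Real.exp (s * c * a) := by
  have h : a ^ s = (c⁻¹) ^ s * (c * a) ^ s := by
    rw [← Real.mul_rpow (by positivity) (by positivity)]
    rw [inv_mul_cancel_left₀ hc.ne']
  rw [h]
  refine mul_le_mul_of_nonneg_left ?_ (by positivity)
  rw [mul_assoc]
  exact rpow_le_exp (by positivity) hs

end Stmt8

namespace Stmt8

noncomputable def K (N : ℕ) : ℕ := ∑ i : Fin N, (univ.filter (fun j => i < j)).card

lemma two_mul_K (N : ℕ) : 2 * K N = N * (N - 1) := by
  have h1 : ∀ i : Fin N, (univ.filter (fun j => i < j)).card = N - 1 - (i : ℕ) := by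
    intro i
    have : (univ.filter (fun j => i < j)) = Finset.Ioi i := by ext j; simp [Finset.mem_Ioi]
    rw [this, Fin.card_Ioi]
  have h2 : K N = ∑ j ∈ Finset.range N, j := by
    unfold K
    simp_rw [h1]
    rw [Fin.sum_univ_eq_sum_range (fun k => N - 1 - k) N]
    exact Finset.sum_range_reflect (fun k => k) N
  rw [h2, mul_comm, Finset.sum_range_id_mul_two]

lemma sq_le_two_Q {N : ℕ} {i j : Fin N} (hij : i ≠ j) (x : Fin N → ℝ) :
    (x i - x j) ^ 2 ≤ 2 * Q N x := by
  have h1 : x i ^ 2 + x j ^ 2 ≤ Q N x := by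
    have : x i ^ 2 + x j ^ 2 = ∑ k ∈ ({i, j} : Finset (Fin N)), x k ^ 2 :=
      (Finset.sum_pair (f := fun k => x k ^ 2) hij).symm
    rw [this]
    exact Finset.sum_le_sum_of_subset_of_nonneg (Finset.subset_univ _)
      (fun k _ _ => sq_nonneg _)
  nlinarith [sq_nonneg (x i + x j)]

lemma Phi_le (N : ℕ) {lam : ℝ} (hlam : 0 ≤ lam) (x : Fin N → ℝ) :
    Phi N lam x ≤ (2 * Q N x) ^ (lam * K N) := by
  have hQ := Q_nonneg N x
  have step : ∀ i j : Fin N, i ≠ j → |x i - x j| ^ (2 * lam) ≤ (2 * Q N x) ^ lam := by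
    intro i j hij
    have h1 : |x i - x j| ^ (2 * lam) = ((x i - x j) ^ 2) ^ lam := by
      rw [Real.rpow_mul (abs_nonneg _), Real.rpow_two, sq_abs]
    rw [h1]
    exact Real.rpow_le_rpow (sq_nonneg _) (sq_le_two_Q hij x) hlam
  calc Phi N lam x ≤ ∏ i : Fin N, ∏ j ∈ univ.filter (fun j => i < j), (2 * Q N x) ^ lam := by
        apply Finset.prod_le_prod
        · intro i _; exact Finset.prod_nonneg fun _ _ => Real.rpow_nonneg (abs_nonneg _) _
        · intro i _
          apply Finset.prod_le_prod
          · intro j _; exact Real.rpow_nonneg (abs_nonneg _) _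
          · intro j hj
            exact step i j (Finset.mem_filter.1 hj).2.ne
    _ = ((2 * Q N x) ^ lam) ^ K N := by
        simp_rw [Finset.prod_const]
        rw [Finset.prod_pow_eq_pow_sum]
        rfl
    _ = (2 * Q N x) ^ (lam * K N) := by
        rw [← Real.rpow_natCast ((2 * Q N x) ^ lam) (K N), ← Real.rpow_mul (by positivity)]

lemma integrable_main (N : ℕ) {lam : ℝ} (hlam : 0 ≤ lam) (m : ℕ) {b : ℝ} (hb : 0 < b) :
    Integrable (fun x : Fin N → ℝ =>
      Phi N lam x * (Q N x) ^ m * Real.exp (-b * Q N x)) := by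
  set s : ℝ := lam * K N + m with hs_def
  have hs : 0 ≤ s := by positivity
  set c : ℝ := b / (2 * s + 2) with hc_def
  have hc : 0 < c := by positivity
  have hsc : s * c ≤ b / 2 := by
    rw [hc_def, ← mul_div_assoc, div_le_div_iff₀ (by positivity) (by norm_num)]
    nlinarith
  set C : ℝ := 2 ^ (lam * K N) * (c⁻¹) ^ s with hC_def
  -- integrable dominating function
  have hg : Integrable (fun x : Fin N → ℝ => C * Real.exp (-(b/2) * Q N x)) := by
    have h1 : Integrable (fun x : Fin N → ℝ => ∏ k : Fin N, Real.exp (-(b/2) * (x k) ^ 2)) :=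
      Integrable.fintype_prod (f := fun _ y => Real.exp (-(b/2) * y ^ 2))
        (fun _ => integrable_exp_neg_mul_sq (by positivity))
    have h2 : ∀ x : Fin N → ℝ, Real.exp (-(b/2) * Q N x)
        = ∏ k : Fin N, Real.exp (-(b/2) * (x k) ^ 2) := by
      intro x
      rw [← Real.exp_sum]
      congr 1
      rw [Q, Finset.mul_sum]
    simp only [h2]
    exact h1.const_mul C
  apply hg.mono'
  · apply Continuous.aestronglyMeasurable
    exact (((continuous_Phi N hlam).mul ((continuous_Q N).pow m)).mul
      ((continuous_const.mul (continuous_Q N)).rexp))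
  · refine Filter.Eventually.of_forall fun x => ?_
    have hQ := Q_nonneg N x
    have hPhi := Phi_nonneg N lam x
    rw [Real.norm_eq_abs, abs_of_nonneg (by positivity)]
    have h1 : Phi N lam x * Q N x ^ m ≤ C * Real.exp (s * c * Q N x) := by
      calc Phi N lam x * Q N x ^ m
          ≤ (2 * Q N x) ^ (lam * K N) * Q N x ^ m := by
            apply mul_le_mul_of_nonneg_right (Phi_le N hlam x) (by positivity)
        _ = 2 ^ (lam * K N) * Q N x ^ s := by
            rw [Real.mul_rpow (by norm_num) hQ, hs_def,
              Real.rpow_add_of_nonneg hQ (by positivity) (by positivity),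
              Real.rpow_natCast, mul_assoc]
        _ ≤ 2 ^ (lam * K N) * ((c⁻¹) ^ s * Real.exp (s * c * Q N x)) := by
            apply mul_le_mul_of_nonneg_left (rpow_le_exp' hQ hs hc) (by positivity)
        _ = C * Real.exp (s * c * Q N x) := by rw [hC_def]; ring
    calc Phi N lam x * Q N x ^ m * Real.exp (-b * Q N x)
        ≤ C * Real.exp (s * c * Q N x) * Real.exp (-b * Q N x) := by
          apply mul_le_mul_of_nonneg_right h1 (Real.exp_nonneg _)
      _ = C * Real.exp (s * c * Q N x + -b * Q N x) := by rw [mul_assoc, ← Real.exp_add]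
      _ ≤ C * Real.exp (-(b/2) * Q N x) := by
          have hC0 : 0 ≤ C := by positivity
          apply mul_le_mul_of_nonneg_left _ hC0
          apply Real.exp_le_exp.2
          nlinarith [mul_le_mul_of_nonneg_right hsc hQ]

end Stmt8

namespace Stmt8

lemma integrable_real (N : ℕ) {lam : ℝ} (hlam : 0 ≤ lam) {b : ℝ} (hb : 0 < b) :
    Integrable (fun x : Fin N → ℝ => Phi N lam x * Real.exp (-b * Q N x)) := by
  simpa using integrable_main N hlam 0 hb

lemma norm_complex_integrand (N : ℕ) (lam : ℝ) (z : ℂ) (x : Fin N → ℝ) :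
    ‖(Phi N lam x : ℂ) * Complex.exp (-z * (Q N x : ℂ))‖
      = Phi N lam x * Real.exp (-z.re * Q N x) := by
  rw [norm_mul, Complex.norm_real, Real.norm_eq_abs,
    Complex.norm_exp, abs_of_nonneg (Phi_nonneg N lam x)]
  congr 2
  simp [Complex.mul_re]

lemma continuous_complex_integrand (N : ℕ) {lam : ℝ} (hlam : 0 ≤ lam) (z : ℂ) :
    Continuous (fun x : Fin N → ℝ =>
      (Phi N lam x : ℂ) * Complex.exp (-z * (Q N x : ℂ))) := by
  apply Continuous.mul
  · exact Complex.continuous_ofReal.comp (continuous_Phi N hlam)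
  · exact Complex.continuous_exp.comp
      (continuous_const.mul (Complex.continuous_ofReal.comp (continuous_Q N)))

lemma integrable_complex (N : ℕ) {lam : ℝ} (hlam : 0 ≤ lam) {z : ℂ} (hz : 0 < z.re) :
    Integrable (fun x : Fin N → ℝ =>
      (Phi N lam x : ℂ) * Complex.exp (-z * (Q N x : ℂ))) := by
  apply (integrable_real N hlam hz).mono'
    ((continuous_complex_integrand N hlam z).aestronglyMeasurable)
  refine Filter.Eventually.of_forall fun x => ?_
  rw [norm_complex_integrand]

lemma scaling (N : ℕ) {lam : ℝ} (hlam : 0 ≤ lam) {t : ℝ} (ht : 0 < t) :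
    ∫ x : Fin N → ℝ, Phi N lam x * Real.exp (-t * Q N x)
      = t ^ (-(((N : ℝ) + 2 * lam * K N) / 2))
        * ∫ x : Fin N → ℝ, Phi N lam x * Real.exp (-Q N x) := by
  set R : ℝ := t ^ (-(1/2) : ℝ) with hR
  have hR0 : 0 < R := Real.rpow_pos_of_pos ht _
  have hR2 : R ^ 2 = t⁻¹ := by
    rw [hR, ← Real.rpow_natCast (t ^ (-(1/2) : ℝ)) 2, ← Real.rpow_mul ht.le]
    norm_num [Real.rpow_neg_one]
  have hQs : ∀ x : Fin N → ℝ, Q N (R • x) = R ^ 2 * Q N x := by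
    intro x
    simp [Q, Pi.smul_apply, smul_eq_mul, mul_pow, Finset.mul_sum]
  have hPhis : ∀ x : Fin N → ℝ, Phi N lam (R • x) = (R ^ (2 * lam)) ^ K N * Phi N lam x := by
    intro x
    unfold Phi
    have h1 : ∀ i j : Fin N, |(R • x) i - (R • x) j| ^ (2 * lam)
        = R ^ (2 * lam) * |x i - x j| ^ (2 * lam) := by
      intro i j
      rw [Pi.smul_apply, Pi.smul_apply, smul_eq_mul, smul_eq_mul, ← mul_sub, abs_mul,
        abs_of_pos hR0, Real.mul_rpow hR0.le (abs_nonneg _)]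
    simp_rw [h1, Finset.prod_mul_distrib, Finset.prod_const]
    rw [Finset.prod_pow_eq_pow_sum]
    rfl
  have key := MeasureTheory.Measure.integral_comp_smul_of_nonneg (volume : Measure (Fin N → ℝ))
    (fun x => Phi N lam x * Real.exp (-t * Q N x)) R (hR := hR0.le)
  have hfin : Module.finrank ℝ (Fin N → ℝ) = N := by simp
  rw [hfin] at key
  have lhs_eq : ∫ x : Fin N → ℝ, Phi N lam (R • x) * Real.exp (-t * Q N (R • x))
      = (R ^ (2 * lam)) ^ K N * ∫ x : Fin N → ℝ, Phi N lam x * Real.exp (-Q N x) := by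
    rw [← smul_eq_mul, ← integral_smul]
    congr 1
    funext x
    rw [smul_eq_mul]
    rw [hPhis, hQs, hR2]
    have : -t * (t⁻¹ * Q N x) = -Q N x := by
      field_simp
    rw [this]; ring
  rw [lhs_eq] at key
  -- key : c * M0 = (R^N)⁻¹ • I_t
  have hRN : (0:ℝ) < R ^ N := pow_pos hR0 N
  have hI : ∫ x : Fin N → ℝ, Phi N lam x * Real.exp (-t * Q N x)
      = R ^ N * ((R ^ (2 * lam)) ^ K N * ∫ x : Fin N → ℝ, Phi N lam x * Real.exp (-Q N x)) := by
    rw [smul_eq_mul] at key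
    rw [key, ← mul_assoc, mul_inv_cancel₀ hRN.ne', one_mul]
  rw [hI, ← mul_assoc]
  congr 1
  -- R^N * (R^(2λ))^K = t^(-(N+2λK)/2)
  have e1 : R ^ N = t ^ (-(1/2) * (N:ℝ)) := by
    rw [hR, ← Real.rpow_natCast (t ^ (-(1/2) : ℝ)) N, ← Real.rpow_mul ht.le]
  have e2 : (R ^ (2 * lam)) ^ K N = t ^ (-(1/2) * (2 * lam) * (K N : ℝ)) := by
    rw [hR, ← Real.rpow_mul ht.le, ← Real.rpow_natCast (t ^ (-(1/2) * (2 * lam))) (K N),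
      ← Real.rpow_mul ht.le]
  rw [e1, e2, ← Real.rpow_add ht]
  congr 1
  ring

end Stmt8

namespace Stmt8

lemma hasDerivAt_G (N : ℕ) {lam : ℝ} (hlam : 0 ≤ lam) {z₀ : ℂ} (hz₀ : 0 < z₀.re) :
    HasDerivAt (fun z : ℂ =>
        ∫ x : Fin N → ℝ, (Phi N lam x : ℂ) * Complex.exp (-z * (Q N x : ℂ)))
      (∫ x : Fin N → ℝ,
        (Phi N lam x : ℂ) * (-(Q N x : ℂ) * Complex.exp (-z₀ * (Q N x : ℂ)))) z₀ := by
  set ε : ℝ := z₀.re / 2 with hε_def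
  have hε : 0 < ε := by positivity
  have key := hasDerivAt_integral_of_dominated_loc_of_deriv_le (μ := volume) (𝕜 := ℂ)
    (F := fun z (x : Fin N → ℝ) => (Phi N lam x : ℂ) * Complex.exp (-z * (Q N x : ℂ)))
    (F' := fun z (x : Fin N → ℝ) =>
      (Phi N lam x : ℂ) * (-(Q N x : ℂ) * Complex.exp (-z * (Q N x : ℂ))))
    (x₀ := z₀) (bound := fun x => Phi N lam x * Q N x * Real.exp (-ε * Q N x)) (Metric.ball_mem_nhds z₀ hε)
    (Filter.Eventually.of_forall fun z =>
      (continuous_complex_integrand N hlam z).aestronglyMeasurable)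
    (integrable_complex N hlam hz₀)
    (by
      apply Continuous.aestronglyMeasurable
      exact (Complex.continuous_ofReal.comp (continuous_Phi N hlam)).mul
        (((Complex.continuous_ofReal.comp (continuous_Q N)).neg).mul
          (Complex.continuous_exp.comp
            (continuous_const.mul (Complex.continuous_ofReal.comp (continuous_Q N)))))
    )
    (Filter.Eventually.of_forall fun x => by
      intro z hzball
      have hQ := Q_nonneg N x
      have hPhi := Phi_nonneg N lam x
      have hre : ε ≤ z.re := by
        have h1 : |(z - z₀).re| ≤ ‖z - z₀‖ := Complex.abs_re_le_norm _
        have h2 : ‖z - z₀‖ < ε := by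
          rw [← Complex.dist_eq]
          exact Metric.mem_ball.1 hzball
        have := abs_le.1 h1
        rw [Complex.sub_re] at this
        have h3 := this.1
        nlinarith [h2]
      calc ‖(Phi N lam x : ℂ) * (-(Q N x : ℂ) * Complex.exp (-z * (Q N x : ℂ)))‖
          = Phi N lam x * (Q N x * Real.exp (-z.re * Q N x)) := by
            rw [norm_mul, norm_mul, norm_neg, Complex.norm_real, Complex.norm_real,
              Real.norm_eq_abs, Real.norm_eq_abs,
              Complex.norm_exp, abs_of_nonneg hPhi, abs_of_nonneg hQ]
            congr 3
            simp [Complex.mul_re]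
        _ ≤ Phi N lam x * (Q N x * Real.exp (-ε * Q N x)) := by
            apply mul_le_mul_of_nonneg_left _ hPhi
            apply mul_le_mul_of_nonneg_left _ hQ
            apply Real.exp_le_exp.2
            nlinarith
        _ = Phi N lam x * Q N x * Real.exp (-ε * Q N x) := by ring)
    (by simpa using integrable_main N hlam 1 hε)
    (Filter.Eventually.of_forall fun x => by
      intro z hzball
      have h1 : HasDerivAt (fun z : ℂ => -z * (Q N x : ℂ)) (-(Q N x : ℂ)) z := by
        simpa using (hasDerivAt_id z).neg.mul_const (Q N x : ℂ)
      have h2 := h1.cexp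
      have h3 := h2.const_mul (Phi N lam x : ℂ)
      convert h3 using 1
      · rfl
      · ring)
  exact key.2

lemma G_real (N : ℕ) (lam : ℝ) (t : ℝ) :
    ∫ x : Fin N → ℝ, (Phi N lam x : ℂ) * Complex.exp (-(t : ℂ) * (Q N x : ℂ))
      = ((∫ x : Fin N → ℝ, Phi N lam x * Real.exp (-t * Q N x) : ℝ) : ℂ) := by
  calc ∫ x : Fin N → ℝ, (Phi N lam x : ℂ) * Complex.exp (-(t : ℂ) * (Q N x : ℂ))
      = ∫ x : Fin N → ℝ, ((Phi N lam x * Real.exp (-t * Q N x) : ℝ) : ℂ) := by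
        congr 1
        funext x
        push_cast
        ring_nf
    _ = _ := integral_ofReal

end Stmt8

open Stmt8

/-- Contour-rotation identity: for `N ≥ 1`, `λ ≥ 0` and
`M := ∫_{ℝ^N} ∏_{i<j} |x_i − x_j|^{2λ} e^{−∑ x_k²} dx` (which is finite), for every complex
`z` with `Re z > 0` the integral `∫_{ℝ^N} ∏_{i<j} |x_i − x_j|^{2λ} e^{−z ∑ x_k²} dx`
converges and equals `z^{−(N + λN(N−1))/2} · M` (principal branch). -/
theorem stmt_8 (N : ℕ) (hN : 1 ≤ N) (lam : ℝ) (hlam : 0 ≤ lam)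
    (M : ℝ)
    (hM : M = ∫ x : Fin N → ℝ,
      (∏ i : Fin N, ∏ j ∈ univ.filter (fun j => i < j), |x i - x j| ^ (2 * lam))
        * Real.exp (- ∑ k, (x k) ^ 2)) :
    Integrable (fun x : Fin N → ℝ =>
      (∏ i : Fin N, ∏ j ∈ univ.filter (fun j => i < j), |x i - x j| ^ (2 * lam))
        * Real.exp (- ∑ k, (x k) ^ 2)) ∧
    ∀ z : ℂ, 0 < z.re →
      Integrable (fun x : Fin N → ℝ =>
        ((∏ i : Fin N, ∏ j ∈ univ.filter (fun j => i < j), |x i - x j| ^ (2 * lam) : ℝ) : ℂ)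
          * Complex.exp (- z * ((∑ k, (x k) ^ 2 : ℝ) : ℂ))) ∧
      (∫ x : Fin N → ℝ,
        ((∏ i : Fin N, ∏ j ∈ univ.filter (fun j => i < j), |x i - x j| ^ (2 * lam) : ℝ) : ℂ)
          * Complex.exp (- z * ((∑ k, (x k) ^ 2 : ℝ) : ℂ)))
        = z ^ (-(((N : ℂ) + (lam : ℂ) * (N : ℂ) * ((N : ℂ) - 1)) / 2)) * (M : ℂ) := by
  have hM' : M = ∫ x : Fin N → ℝ, Phi N lam x * Real.exp (-Q N x) := hM
  have hK : 2 * ((K N : ℕ) : ℝ) = (N : ℝ) * ((N : ℝ) - 1) := by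
    have h0 := two_mul_K N
    have h1 : ((2 * K N : ℕ) : ℝ) = ((N * (N - 1) : ℕ) : ℝ) := by rw [h0]
    push_cast [Nat.cast_sub hN] at h1
    linarith
  set p : ℝ := ((N : ℝ) + 2 * lam * (K N : ℕ)) / 2 with hp_def
  constructor
  · have := integrable_real N hlam (b := 1) one_pos
    simpa [Phi, Q, neg_mul] using this
  intro z hz
  constructor
  · have := integrable_complex N hlam hz
    simpa [Phi, Q] using this
  -- the identity
  set G : ℂ → ℂ := fun w =>
    ∫ x : Fin N → ℝ, (Phi N lam x : ℂ) * Complex.exp (-w * (Q N x : ℂ)) with hG_def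
  set H : ℂ → ℂ := fun w => w ^ (-(p : ℂ)) * (M : ℂ) with hH_def
  set S : Set ℂ := {w | 0 < w.re} with hS_def
  have hSopen : IsOpen S := isOpen_lt continuous_const Complex.continuous_re
  have hGd : DifferentiableOn ℂ G S := fun w hw =>
    ((hasDerivAt_G N hlam hw).differentiableAt).differentiableWithinAt
  have hHd : DifferentiableOn ℂ H S := by
    intro w hw
    apply DifferentiableAt.differentiableWithinAt
    exact (differentiableAt_fun_id.cpow (differentiableAt_const _)
      (Complex.mem_slitPlane_iff.2 (Or.inl hw))).mul_const _
  have hGa := hGd.analyticOnNhd hSopen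
  have hHa := hHd.analyticOnNhd hSopen
  have hpre : IsPreconnected S := (convex_halfSpace_re_gt 0).isPreconnected
  have h1S : (1 : ℂ) ∈ S := by simp [hS_def]
  have heq_real : ∀ t : ℝ, 0 < t → G (t : ℂ) = H (t : ℂ) := by
    intro t ht
    have e1 : G (t : ℂ)
        = ((∫ x : Fin N → ℝ, Phi N lam x * Real.exp (-t * Q N x) : ℝ) : ℂ) :=
      G_real N lam t
    rw [e1, scaling N hlam ht, ← hM']
    rw [hH_def]
    rw [Complex.ofReal_mul, Complex.ofReal_cpow ht.le]
    norm_num [hp_def]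
  have htend : Filter.Tendsto (fun n : ℕ => ((1 + 1 / ((n : ℝ) + 1) : ℝ) : ℂ))
      Filter.atTop (nhdsWithin (1 : ℂ) {(1 : ℂ)}ᶜ) := by
    apply tendsto_nhdsWithin_of_tendsto_nhds_of_eventually_within
    · have h1 : Filter.Tendsto (fun n : ℕ => (1 + 1 / ((n : ℝ) + 1) : ℝ))
          Filter.atTop (nhds 1) := by
        simpa using (tendsto_const_nhds (x := (1:ℝ))).add tendsto_one_div_add_atTop_nhds_zero_nat
      have h2 := (Complex.continuous_ofReal.tendsto (1 : ℝ)).comp h1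
      rw [Complex.ofReal_one] at h2
      exact h2
    · refine Filter.Eventually.of_forall fun n => ?_
      simp only [Set.mem_compl_iff, Set.mem_singleton_iff]
      intro h
      have : (1 + 1 / ((n : ℝ) + 1) : ℝ) = 1 := by exact_mod_cast h
      have hpos : 0 < 1 / ((n : ℝ) + 1) := by positivity
      linarith
  have hfreq : ∃ᶠ w in nhdsWithin (1 : ℂ) {(1 : ℂ)}ᶜ, G w = H w :=
    htend.frequently (Filter.Eventually.of_forall
      (fun n => heq_real _ (by positivity))).frequently
  have hEq := hGa.eqOn_of_preconnected_of_frequently_eq hHa hpre h1S hfreq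
  have hzS : z ∈ S := hz
  have hfinal := hEq hzS
  have hexp : -(((N : ℂ) + (lam : ℂ) * (N : ℂ) * ((N : ℂ) - 1)) / 2) = -(p : ℂ) := by
    have hKC : 2 * ((K N : ℕ) : ℂ) = (N : ℂ) * ((N : ℂ) - 1) := by exact_mod_cast hK
    rw [hp_def]
    push_cast
    linear_combination (lam : ℂ) / 2 * hKC
  rw [hexp]
  exact hfinal
end

section
/- Let N ≥ 2, λ ≥ 0, and m, ħ, ω₀ > 0. For b > 0 and v ∈ ℝ define Ψ_{b,v} : (Fin N → ℝ) → ℂ by Ψ_{b,v}(x) := b^{−N/2} ∏_{i<j} |(x_i − x_j)/b|^{λ} · exp( − (mω₀/2ħ) ∑_k x_k²/b² + i (m v/2ħ) ∑_k x_k² ). Then ‖Ψ_{b,v}‖² := ∫ |Ψ_{b,v}|² dx is independent of b and v, and for all b, b′ > 0 and v, v′ ∈ ℝ the fidelity satisfies |⟨Ψ_{b,v}, Ψ_{b′,v′}⟩|² / ‖Ψ_{b,v}‖²‖Ψ_{b′,v′}‖² = [ m ω₀ / ( ħ · b · b′ · A ) ]^{ N + λN(N−1) }, where A := (mω₀/2ħ)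 · √( (1/b² + 1/b′²)² + (v − v′)²/ω₀² ). -/
open Finset MeasureTheory Filter
open scoped Topology Real ENNReal
namespace CS9
variable {N : ℕ}
noncomputable def SS (x : Fin N → ℝ) : ℝ := ∑ k, x k ^ 2
noncomputable def Jb (lam : ℝ) (x : Fin N → ℝ) : ℝ :=
  ∏ i : Fin N, ∏ j ∈ univ.filter (fun j => i < j), |x i - x j| ^ lam
noncomputable def hh (lam : ℝ) (x : Fin N → ℝ) : ℝ := (Jb lam x) ^ 2
def P (N : ℕ) : ℕ := ∑ i : Fin N, #(univ.filter fun j : Fin N => i < j)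
lemma SS_nonneg (x : Fin N → ℝ) : 0 ≤ SS x := Finset.sum_nonneg fun k _ => sq_nonneg _
lemma P_mul_two (N : ℕ) : (P N) * 2 = N * (N - 1) := by
  unfold P
  have h1 : ∀ i : Fin N, #(univ.filter fun j => i < j) = N - 1 - (i:ℕ) := by
    intro i
    have : (univ.filter fun j => i < j) = Finset.Ioi i := by ext j; simp
    rw [this, Fin.card_Ioi]
  simp only [h1]
  rw [Fin.sum_univ_eq_sum_range (fun i => N - 1 - i) N,
    Finset.sum_range_reflect (fun i => i) N]
  exact Finset.sum_range_id_mul_two N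

lemma SS_smul (c : ℝ) (x : Fin N → ℝ) : SS (c • x) = c ^ 2 * SS x := by
  simp [SS, Finset.mul_sum, mul_pow]

lemma sq_le_SS (x : Fin N → ℝ) (i : Fin N) : x i ^ 2 ≤ SS x :=
  Finset.single_le_sum (fun k _ => sq_nonneg (x k)) (mem_univ i)
lemma continuous_SS : Continuous (SS (N := N)) := by unfold SS; fun_prop
lemma continuous_Jb {lam : ℝ} (hlam : 0 ≤ lam) : Continuous (Jb (N := N) lam) := by
  unfold Jb
  refine continuous_finset_prod _ fun i _ => continuous_finset_prod _ fun j _ => ?_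
  exact (Real.continuous_rpow_const hlam).comp ((continuous_apply i).sub (continuous_apply j)).abs
lemma continuous_hh {lam : ℝ} (hlam : 0 ≤ lam) : Continuous (hh (N := N) lam) :=
  (continuous_Jb hlam).pow 2
lemma Jb_nonneg (lam : ℝ) (x : Fin N → ℝ) : 0 ≤ Jb lam x :=
  Finset.prod_nonneg fun i _ => Finset.prod_nonneg fun j _ => Real.rpow_nonneg (abs_nonneg _) _
lemma hh_nonneg (lam : ℝ) (x : Fin N → ℝ) : 0 ≤ hh lam x := sq_nonneg _

lemma Jb_smul' {lam : ℝ} (c : ℝ) (x : Fin N → ℝ) :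
    Jb lam (c • x) = (|c| ^ lam) ^ (P N) * Jb lam x := by
  unfold Jb
  simp only [Pi.smul_apply, smul_eq_mul, ← mul_sub, abs_mul,
    Real.mul_rpow (abs_nonneg c) (abs_nonneg _), Finset.prod_mul_distrib, Finset.prod_const]
  rw [Finset.prod_pow_eq_pow_sum]
  rfl

lemma hh_smul {lam : ℝ} (c : ℝ) (x : Fin N → ℝ) :
    hh lam (c • x) = ((|c| ^ lam) ^ (P N)) ^ 2 * hh lam x := by
  rw [hh, Jb_smul', mul_pow]; rfl

lemma integrable_gauss (a : ℝ) (ha : 0 < a) :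
    Integrable (fun x : Fin N → ℝ => Real.exp (-a * SS x)) := by
  have h1 : ∀ x : Fin N → ℝ, Real.exp (-a * SS x) = ∏ k, Real.exp (-a * x k ^ 2) := by
    intro x; rw [SS, Finset.mul_sum, Real.exp_sum]
  simp only [h1]
  exact Integrable.fintype_prod fun _ => integrable_exp_neg_mul_sq ha

lemma poly_le_exp {q : ℝ} (hq : 0 ≤ q) {δ : ℝ} (hδ : 0 < δ) {t : ℝ} (ht : 0 ≤ t) :
    t ^ q ≤ ((q + 1) / δ) ^ q * Real.exp (δ * t) := by
  set u : ℝ := δ * t / (q + 1) with hu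
  have hq1 : (0:ℝ) < q + 1 := by linarith
  have hu0 : 0 ≤ u := by positivity
  have h1 : t = ((q + 1) / δ) * u := by rw [hu]; field_simp
  have h2 : u ^ q ≤ Real.exp (δ * t) := by
    have h3 : u ≤ Real.exp u := by linarith [Real.add_one_le_exp u]
    have h4 : u ^ q ≤ (Real.exp u) ^ q := Real.rpow_le_rpow hu0 h3 hq
    have h5 : (Real.exp u) ^ q = Real.exp (u * q) := (Real.exp_mul u q).symm
    have h6 : u * q ≤ δ * t := by
      rw [hu]; rw [div_mul_eq_mul_div, div_le_iff₀ hq1]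
      nlinarith [mul_nonneg (mul_nonneg hδ.le ht) hq]
    calc u ^ q ≤ (Real.exp u) ^ q := h4
      _ = Real.exp (u * q) := h5
      _ ≤ Real.exp (δ * t) := Real.exp_le_exp.2 h6
  calc t ^ q = (((q + 1) / δ) * u) ^ q := by rw [← h1]
    _ = ((q + 1) / δ) ^ q * u ^ q := Real.mul_rpow (by positivity) hu0
    _ ≤ ((q + 1) / δ) ^ q * Real.exp (δ * t) :=
        mul_le_mul_of_nonneg_left h2 (Real.rpow_nonneg (by positivity) q)

lemma hh_le {lam : ℝ} (hlam : 0 ≤ lam) (x : Fin N → ℝ) :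
    hh lam x ≤ (4 * SS x) ^ (lam * (P N)) := by
  have key : ∀ i j : Fin N, (|x i - x j| ^ lam) ^ 2 ≤ (4 * SS x) ^ lam := by
    intro i j
    have h1 : (|x i - x j| ^ lam) ^ (2:ℕ) = ((x i - x j) ^ 2) ^ lam := by
      rw [← Real.rpow_natCast (|x i - x j| ^ lam) 2, ← Real.rpow_mul (abs_nonneg _),
        mul_comm lam, Real.rpow_mul (abs_nonneg _), Real.rpow_natCast, sq_abs]
    have h2 : (x i - x j) ^ 2 ≤ 4 * SS x := by
      nlinarith [sq_le_SS x i, sq_le_SS x j, sq_nonneg (x i + x j)]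
    rw [h1]
    exact Real.rpow_le_rpow (sq_nonneg _) h2 hlam
  have h3 : hh lam x = ∏ i : Fin N, ∏ j ∈ univ.filter (fun j => i < j),
      (|x i - x j| ^ lam) ^ 2 := by
    rw [hh, Jb, ← Finset.prod_pow]
    exact Finset.prod_congr rfl fun i _ => (Finset.prod_pow _ 2 _).symm
  rw [h3]
  calc ∏ i : Fin N, ∏ j ∈ univ.filter (fun j => i < j), (|x i - x j| ^ lam) ^ 2
      ≤ ∏ i : Fin N, ∏ j ∈ univ.filter (fun j => i < j), (4 * SS x) ^ lam := by
        refine Finset.prod_le_prod (fun i _ => Finset.prod_nonneg fun j _ => by positivity)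
          (fun i _ => Finset.prod_le_prod (fun j _ => by positivity) (fun j _ => key i j))
    _ = (4 * SS x) ^ (lam * (P N)) := by
        simp only [Finset.prod_const, Finset.prod_pow_eq_pow_sum]
        rw [show (∑ i : Fin N, #(filter (fun j => i < j) univ)) = P N from rfl,
          ← Real.rpow_natCast ((4 * SS x) ^ lam) (P N), ← Real.rpow_mul (mul_nonneg (by norm_num) (SS_nonneg x))]

lemma integrable_master {lam : ℝ} (hlam : 0 ≤ lam) (r : ℕ) {a : ℝ} (ha : 0 < a) :
    Integrable (fun x : Fin N → ℝ => SS x ^ r * hh lam x * Real.exp (-a * SS x)) := by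
  set q2 : ℝ := lam * (P N) with hq2
  have hq2' : 0 ≤ q2 := by positivity
  set δ : ℝ := a / 4 with hδdef
  have hδ : 0 < δ := by positivity
  set C1 : ℝ := (((r:ℝ) + 1) / δ) ^ (r:ℝ) with hC1
  set C2 : ℝ := ((q2 + 1) / (δ/4)) ^ q2 with hC2
  have hC1' : 0 ≤ C1 := Real.rpow_nonneg (by positivity) _
  have hC2' : 0 ≤ C2 := Real.rpow_nonneg (by positivity) _
  have bound : ∀ x : Fin N → ℝ,
      SS x ^ r * hh lam x * Real.exp (-a * SS x) ≤ C1 * C2 * Real.exp (-(a/2) * SS x) := by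
    intro x
    have hS := SS_nonneg x
    have b1 : SS x ^ r ≤ C1 * Real.exp (δ * SS x) := by
      have := poly_le_exp (q := (r:ℝ)) (Nat.cast_nonneg r) hδ hS
      rwa [Real.rpow_natCast] at this
    have b2 : hh lam x ≤ C2 * Real.exp (δ * SS x) := by
      refine (hh_le hlam x).trans ?_
      have := poly_le_exp (q := q2) hq2' (by positivity : (0:ℝ) < δ/4) (t := 4 * SS x) (by positivity)
      exact this.trans_eq (by rw [hC2]; congr 2; ring)
    have b3 : SS x ^ r * hh lam x ≤ (C1 * C2) * (Real.exp (δ * SS x) * Real.exp (δ * SS x)) := by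
      have := mul_le_mul b1 b2 (hh_nonneg lam x) (by positivity)
      calc SS x ^ r * hh lam x ≤ (C1 * Real.exp (δ * SS x)) * (C2 * Real.exp (δ * SS x)) := this
        _ = (C1 * C2) * (Real.exp (δ * SS x) * Real.exp (δ * SS x)) := by ring
    have b4 : Real.exp (δ * SS x) * Real.exp (δ * SS x) * Real.exp (-a * SS x)
        = Real.exp (-(a/2) * SS x) := by
      rw [← Real.exp_add, ← Real.exp_add]; congr 1; rw [hδdef]; ring
    calc SS x ^ r * hh lam x * Real.exp (-a * SS x)
        ≤ (C1 * C2) * (Real.exp (δ * SS x) * Real.exp (δ * SS x)) * Real.exp (-a * SS x) :=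
          mul_le_mul_of_nonneg_right b3 (Real.exp_nonneg _)
      _ = C1 * C2 * Real.exp (-(a/2) * SS x) := by rw [mul_assoc, b4]
  have hcont : Continuous (fun x : Fin N → ℝ => SS x ^ r * hh lam x * Real.exp (-a * SS x)) :=
    ((continuous_SS.pow r).mul (continuous_hh hlam)).mul
      (Real.continuous_exp.comp (continuous_const.mul continuous_SS))
  refine Integrable.mono' (((integrable_gauss (a/2) (by positivity))).const_mul (C1 * C2))
    hcont.aestronglyMeasurable (ae_of_all _ fun x => ?_)
  rw [Real.norm_eq_abs, abs_of_nonneg (mul_nonneg (mul_nonneg (pow_nonneg (SS_nonneg x) r) (hh_nonneg lam x)) (Real.exp_nonneg _))]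
  exact bound x

noncomputable def Greal (N : ℕ) (lam a : ℝ) : ℝ :=
  ∫ x : Fin N → ℝ, hh lam x * Real.exp (-a * SS x)

noncomputable def sExp (N : ℕ) (lam : ℝ) : ℝ := N / 2 + lam * P N

lemma integrable_hh_exp {lam : ℝ} (hlam : 0 ≤ lam) {a : ℝ} (ha : 0 < a) :
    Integrable (fun x : Fin N → ℝ => hh lam x * Real.exp (-a * SS x)) := by
  simpa using integrable_master (N := N) hlam 0 ha

lemma Greal_scale {lam : ℝ} (hlam : 0 ≤ lam) {a : ℝ} (ha : 0 < a) :
    Greal N lam a = a ^ (-(sExp N lam)) * Greal N lam 1 := by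
  set c : ℝ := Real.sqrt a with hc
  have hcpos : 0 < c := Real.sqrt_pos.2 ha
  have hc2 : c ^ 2 = a := Real.sq_sqrt ha.le
  have key := Measure.integral_comp_smul (volume : Measure (Fin N → ℝ))
    (fun x => hh lam x * Real.exp (-1 * SS x)) c
  rw [Module.finrank_fin_fun] at key
  have lhs : ∀ x : Fin N → ℝ, hh lam (c • x) * Real.exp (-1 * SS (c • x))
      = ((|c| ^ lam) ^ (P N)) ^ 2 * (hh lam x * Real.exp (-a * SS x)) := by
    intro x
    rw [hh_smul, SS_smul, hc2]
    ring_nf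
  simp only [lhs] at key
  rw [MeasureTheory.integral_const_mul] at key
  have e0 : (∫ x : Fin N → ℝ, hh lam x * Real.exp (-a * SS x)) = Greal N lam a := rfl
  have e1 : (∫ x : Fin N → ℝ, hh lam x * Real.exp (-1 * SS x)) = Greal N lam 1 := rfl
  rw [e0, e1] at key
  -- key : ((|c| ^ lam) ^ P N) ^ 2 * Greal N lam a = |(c ^ N)⁻¹| • Greal N lam 1
  have habs : |c| = c := abs_of_pos hcpos
  have hcoef : ((|c| ^ lam) ^ (P N)) ^ 2 = a ^ (lam * (P N)) := by
    rw [habs, ← Real.rpow_natCast (c ^ lam) (P N), ← Real.rpow_mul hcpos.le,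
      ← Real.rpow_natCast (c ^ (lam * (P N))) 2, ← Real.rpow_mul hcpos.le, hc,
      Real.sqrt_eq_rpow, ← Real.rpow_mul ha.le]
    congr 1; ring
  have hsm : |((c : ℝ) ^ N)⁻¹| = a ^ (-((N : ℝ) / 2)) := by
    rw [abs_inv, abs_of_pos (pow_pos hcpos N), ← Real.rpow_natCast c N, hc,
      Real.sqrt_eq_rpow, ← Real.rpow_mul ha.le, ← Real.rpow_neg ha.le]
    congr 1; ring
  rw [hcoef, hsm, smul_eq_mul] at key
  have hne : a ^ (lam * (P N)) ≠ 0 := (Real.rpow_pos_of_pos ha _).ne'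
  have key2 : Greal N lam a = (a ^ (lam * (P N)))⁻¹ * (a ^ (-((N : ℝ) / 2)) * Greal N lam 1) := by
    rw [eq_inv_mul_iff_mul_eq₀ hne]
    exact key
  rw [key2, ← Real.rpow_neg ha.le, ← mul_assoc, ← Real.rpow_add ha]
  congr 2
  rw [sExp]; ring

lemma Greal_one_pos {lam : ℝ} (hlam : 0 ≤ lam) : 0 < Greal N lam 1 := by
  rw [Greal]
  rw [MeasureTheory.integral_pos_iff_support_of_nonneg_ae
    (ae_of_all _ fun x => mul_nonneg (hh_nonneg lam x) (Real.exp_nonneg _))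
    (integrable_hh_exp hlam one_pos)]
  set U : Set (Fin N → ℝ) := ⋂ (i : Fin N) (j : Fin N), {x | i < j → x i ≠ x j} with hU
  have hUopen : IsOpen U := by
    refine isOpen_iInter_of_finite fun i => isOpen_iInter_of_finite fun j => ?_
    by_cases hij : i < j
    · simp only [hij, forall_true_left]
      exact isOpen_ne_fun (continuous_apply i) (continuous_apply j)
    · simp only [hij, IsEmpty.forall_iff]
      simp [Set.setOf_true, isOpen_univ]
  have hUne : U.Nonempty := by
    refine ⟨fun k => (k : ℝ), ?_⟩
    simp only [hU, Set.mem_iInter, Set.mem_setOf_eq]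
    intro i j hij
    exact fun h => absurd (Nat.cast_injective h : (i:ℕ) = (j:ℕ)) (Fin.val_ne_of_ne hij.ne)
  have hsub : U ⊆ Function.support fun x => hh lam x * Real.exp (-1 * SS x) := by
    intro x hx
    have hpos : 0 < hh lam x := by
      rw [hh]
      refine pow_pos ?_ 2
      refine Finset.prod_pos fun i _ => Finset.prod_pos fun j hj => ?_
      have hij : i < j := (Finset.mem_filter.1 hj).2
      have : x i ≠ x j := by
        have := Set.mem_iInter.1 (Set.mem_iInter.1 hx i) j
        exact this hij
      exact Real.rpow_pos_of_pos (abs_pos.2 (sub_ne_zero.2 this)) lam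
    exact ne_of_gt (mul_pos hpos (Real.exp_pos _))
  calc (0:ℝ≥0∞) < volume U := hUopen.measure_pos volume hUne
    _ ≤ _ := measure_mono hsub


noncomputable def FF (N : ℕ) (lam : ℝ) (z : ℂ) : ℂ :=
  ∫ x : Fin N → ℝ, (hh lam x : ℂ) * Complex.exp (-z * (SS x : ℂ))

lemma norm_integrand (lam : ℝ) (z : ℂ) (x : Fin N → ℝ) :
    ‖(hh lam x : ℂ) * Complex.exp (-z * (SS x : ℂ))‖
      = hh lam x * Real.exp (-z.re * SS x) := by
  rw [norm_mul, Complex.norm_real, Real.norm_eq_abs, abs_of_nonneg (hh_nonneg lam x),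
    Complex.norm_exp]
  congr 2
  simp

lemma continuous_integrand {lam : ℝ} (hlam : 0 ≤ lam) (z : ℂ) :
    Continuous (fun x : Fin N → ℝ => (hh lam x : ℂ) * Complex.exp (-z * (SS x : ℂ))) :=
  (Complex.continuous_ofReal.comp (continuous_hh hlam)).mul
    (Complex.continuous_exp.comp
      (continuous_const.mul (Complex.continuous_ofReal.comp continuous_SS)))

lemma integrable_FF {lam : ℝ} (hlam : 0 ≤ lam) {z : ℂ} (hz : 0 < z.re) :
    Integrable (fun x : Fin N → ℝ => (hh lam x : ℂ) * Complex.exp (-z * (SS x : ℂ))) := by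
  refine Integrable.mono' (integrable_hh_exp hlam hz)
    (continuous_integrand hlam z).aestronglyMeasurable (ae_of_all _ fun x => ?_)
  exact le_of_eq (norm_integrand lam z x)

lemma FF_real (lam : ℝ) (a : ℝ) : FF N lam (a : ℂ) = ((Greal N lam a : ℝ) : ℂ) := by
  have h1 : (∫ x : Fin N → ℝ, ((hh lam x * Real.exp (-a * SS x) : ℝ) : ℂ))
      = ((∫ x : Fin N → ℝ, hh lam x * Real.exp (-a * SS x) : ℝ) : ℂ) := integral_ofReal
  rw [FF, Greal, ← h1]
  congr 1; funext x
  push_cast [Complex.ofReal_exp]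
  ring_nf

lemma FF_diff {lam : ℝ} (hlam : 0 ≤ lam) {z : ℂ} (hz : 0 < z.re) :
    DifferentiableAt ℂ (FF N lam) z := by
  set ε : ℝ := z.re / 2 with hε
  have hεpos : 0 < ε := by positivity
  have key := hasDerivAt_integral_of_dominated_loc_of_deriv_le (μ := volume)
    (F := fun (w : ℂ) (x : Fin N → ℝ) => (hh lam x : ℂ) * Complex.exp (-w * (SS x : ℂ)))
    (F' := fun (w : ℂ) (x : Fin N → ℝ) =>
      (hh lam x : ℂ) * (Complex.exp (-w * (SS x : ℂ)) * (-(SS x : ℂ))))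
    (x₀ := z)
    (bound := fun x => SS x ^ 1 * hh lam x * Real.exp (-(z.re/2) * SS x))
    (Metric.ball_mem_nhds z hεpos)
    (Filter.Eventually.of_forall fun w => (continuous_integrand hlam w).aestronglyMeasurable)
    (integrable_FF hlam hz)
    (by
      have : Continuous (fun x : Fin N → ℝ =>
          (hh lam x : ℂ) * (Complex.exp (-z * (SS x : ℂ)) * (-(SS x : ℂ)))) :=
        (Complex.continuous_ofReal.comp (continuous_hh hlam)).mul
          ((Complex.continuous_exp.comp
            (continuous_const.mul (Complex.continuous_ofReal.comp continuous_SS))).mul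
            ((Complex.continuous_ofReal.comp continuous_SS).neg))
      exact this.aestronglyMeasurable)
    (ae_of_all _ fun x w hw => ?_) (integrable_master hlam 1 (by positivity)) 
    (ae_of_all _ fun x w hw => ?_)
  · exact key.2.differentiableAt
  · -- bound
    have hwre : z.re / 2 ≤ w.re := by
      have h1 : |(w - z).re| ≤ ‖w - z‖ := Complex.abs_re_le_norm _
      have h2 : ‖w - z‖ < ε := by
        rw [Metric.mem_ball, dist_eq_norm] at hw
        exact hw
      have := abs_lt.1 (lt_of_le_of_lt h1 h2)
      simp only [Complex.sub_re] at this
      linarith [this.1]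
    have hS := SS_nonneg x
    have e1 : ‖(hh lam x : ℂ) * (Complex.exp (-w * (SS x : ℂ)) * (-(SS x : ℂ)))‖
        = hh lam x * (Real.exp (-w.re * SS x) * SS x) := by
      rw [norm_mul, norm_mul, Complex.norm_real, Real.norm_eq_abs,
        abs_of_nonneg (hh_nonneg lam x), Complex.norm_exp,
        norm_neg, Complex.norm_real, Real.norm_eq_abs, abs_of_nonneg hS]
      congr 3
      simp
    rw [e1]
    have : Real.exp (-w.re * SS x) ≤ Real.exp (-(z.re/2) * SS x) := by
      apply Real.exp_le_exp.2
      nlinarith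
    calc hh lam x * (Real.exp (-w.re * SS x) * SS x)
        ≤ hh lam x * (Real.exp (-(z.re/2) * SS x) * SS x) := by
          apply mul_le_mul_of_nonneg_left _ (hh_nonneg lam x)
          exact mul_le_mul_of_nonneg_right this hS
      _ = (fun x => SS x ^ 1 * hh lam x * Real.exp (-(z.re/2) * SS x)) x := by
          simp only [pow_one]; ring
  · -- derivative
    have h1 : HasDerivAt (fun w : ℂ => -w * (SS x : ℂ)) (-(SS x : ℂ)) w := by
      simpa using ((hasDerivAt_id w).neg.mul_const ((SS x : ℝ) : ℂ))
    exact (h1.cexp).const_mul _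

lemma FF_eqOn {lam : ℝ} (hlam : 0 ≤ lam) :
    Set.EqOn (FF N lam)
      (fun z : ℂ => ((Greal N lam 1 : ℝ) : ℂ) * z ^ (-(sExp N lam) : ℂ))
      {z : ℂ | 0 < z.re} := by
  have hopen : IsOpen {z : ℂ | 0 < z.re} := isOpen_lt continuous_const Complex.continuous_re
  have hf : AnalyticOnNhd ℂ (FF N lam) {z : ℂ | 0 < z.re} :=
    DifferentiableOn.analyticOnNhd
      (fun z hz => (FF_diff hlam hz).differentiableWithinAt) hopen
  have hg : AnalyticOnNhd ℂ
      (fun z : ℂ => ((Greal N lam 1 : ℝ) : ℂ) * z ^ (-(sExp N lam) : ℂ))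
      {z : ℂ | 0 < z.re} := by
    refine DifferentiableOn.analyticOnNhd (fun z hz => DifferentiableAt.differentiableWithinAt ?_) hopen
    exact (differentiableAt_id.cpow (differentiableAt_const _)
      (Complex.mem_slitPlane_iff.mpr (Or.inl hz))).const_mul _
  have hvals : ∀ a : ℝ, 0 < a →
      FF N lam a = ((Greal N lam 1 : ℝ) : ℂ) * (a : ℂ) ^ (-(sExp N lam) : ℂ) := by
    intro a ha
    rw [FF_real, Greal_scale hlam ha]
    push_cast
    rw [Complex.ofReal_cpow ha.le]
    push_cast
    ring
  have hseq : Filter.Tendsto (fun n : ℕ => ((1 + 1/(n+1) : ℝ) : ℂ)) atTop (𝓝[≠] (1:ℂ)) := by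
    rw [tendsto_nhdsWithin_iff]
    constructor
    · have h0 : Filter.Tendsto (fun n : ℕ => (1 + 1/(n+1) : ℝ)) atTop (𝓝 1) := by
        have := tendsto_one_div_add_atTop_nhds_zero_nat (𝕜 := ℝ)
        simpa using (tendsto_const_nhds (α := ℕ) (f := atTop) (x := (1:ℝ))).add this
      have := (Complex.continuous_ofReal.tendsto (1:ℝ)).comp h0
      simpa [Function.comp_def] using this
    · refine Filter.Eventually.of_forall fun n => ?_
      simp only [Set.mem_compl_iff, Set.mem_singleton_iff]
      intro hcon
      have h1 : (1 + 1/(n+1) : ℝ) = 1 := by exact_mod_cast hcon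
      have h2 : (0:ℝ) < 1/(n+1) := by positivity
      linarith
  have hfreq : ∃ᶠ z in 𝓝[≠] (1:ℂ),
      FF N lam z = ((Greal N lam 1 : ℝ) : ℂ) * z ^ (-(sExp N lam) : ℂ) :=
    hseq.frequently (Filter.Frequently.of_forall fun n => hvals _ (by positivity))
  exact hf.eqOn_of_preconnected_of_frequently_eq hg
    (convex_halfSpace_re_gt 0).isPreconnected
    (by simp : (1:ℂ) ∈ {z : ℂ | 0 < z.re}) hfreq

lemma FF_norm {lam : ℝ} (hlam : 0 ≤ lam) {z : ℂ} (hz : 0 < z.re) :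
    ‖FF N lam z‖ = ‖z‖ ^ (-(sExp N lam)) * Greal N lam 1 := by
  rw [FF_eqOn hlam hz, norm_mul, Complex.norm_real, Real.norm_eq_abs,
    abs_of_pos (Greal_one_pos hlam)]
  have hc : (-(sExp N lam) : ℂ) = ((-(sExp N lam) : ℝ) : ℂ) := by push_cast; ring
  rw [hc, Complex.norm_cpow_real]
  ring


lemma Jb_div {lam : ℝ} (hlam : 0 ≤ lam) {b : ℝ} (hb : 0 < b) (x : Fin N → ℝ) :
    (∏ i : Fin N, ∏ j ∈ univ.filter (fun j => i < j), |(x i - x j) / b| ^ lam)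
      = Jb lam x / (b ^ lam) ^ (P N) := by
  have key : ∀ i j : Fin N, |(x i - x j)/b| ^ lam = |x i - x j| ^ lam / b ^ lam := by
    intro i j
    rw [abs_div, abs_of_pos hb, Real.div_rpow (abs_nonneg _) hb.le]
  simp only [key, Finset.prod_div_distrib, Finset.prod_const]
  rw [Jb, Finset.prod_pow_eq_pow_sum]
  rfl

lemma rpow_div_helper {c : ℝ} (hc : 0 < c) (N : ℕ) (lam : ℝ) :
    c ^ (-(N:ℝ)/2) / (c ^ lam) ^ (P N) = c ^ (-(sExp N lam)) := by
  rw [← Real.rpow_natCast (c ^ lam) (P N), ← Real.rpow_mul hc.le, ← Real.rpow_sub hc, sExp]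
  congr 1; ring

end CS9

open CS9 in
/-- Survival probability of the scale-invariant Calogero–Sutherland Jastrow states:
for `Ψ_{b,v}(x) = b^{−N/2} ∏_{i<j} |(x_i−x_j)/b|^λ exp(−(mω₀/2ħ)∑x_k²/b² + i(mv/2ħ)∑x_k²)`,
the L² norm `∫ |Ψ_{b,v}|²` is independent of `b > 0` and `v`, and the fidelity
`|⟨Ψ_{b,v}, Ψ_{b',v'}⟩|²/(‖Ψ_{b,v}‖²‖Ψ_{b',v'}‖²)` equals
`[mω₀/(ħ b b' A)]^{N + λN(N−1)}` with
`A = (mω₀/2ħ)√((1/b² + 1/b'²)² + (v−v')²/ω₀²)`. -/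
theorem stmt_9 (N : ℕ) (hN : 2 ≤ N) (lam : ℝ) (hlam : 0 ≤ lam)
    (m hbar ω₀ : ℝ) (hm : 0 < m) (hhbar : 0 < hbar) (hω₀ : 0 < ω₀)
    (Ψ : ℝ → ℝ → (Fin N → ℝ) → ℂ)
    (hΨ : ∀ (b v : ℝ), 0 < b → ∀ x : Fin N → ℝ, Ψ b v x =
      ((b ^ (-(N : ℝ) / 2)
        * (∏ i : Fin N, ∏ j ∈ univ.filter (fun j => i < j), |(x i - x j) / b| ^ lam)
        * Real.exp (- (m * ω₀ / (2 * hbar)) * (∑ k, (x k) ^ 2) / b ^ 2) : ℝ) : ℂ)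
      * Complex.exp (Complex.I * ((m * v / (2 * hbar)) * (∑ k, (x k) ^ 2) : ℝ))) :
    (∀ b v b' v' : ℝ, 0 < b → 0 < b' →
      (∫ x : Fin N → ℝ, ‖Ψ b v x‖ ^ 2) = ∫ x : Fin N → ℝ, ‖Ψ b' v' x‖ ^ 2) ∧
    (∀ b v b' v' : ℝ, 0 < b → 0 < b' →
      ‖∫ x : Fin N → ℝ, (starRingEnd ℂ) (Ψ b v x) * Ψ b' v' x‖ ^ 2
        / ((∫ x : Fin N → ℝ, ‖Ψ b v x‖ ^ 2) * (∫ x : Fin N → ℝ, ‖Ψ b' v' x‖ ^ 2))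
      = (m * ω₀ / (hbar * b * b' *
          ((m * ω₀ / (2 * hbar))
            * Real.sqrt ((1 / b ^ 2 + 1 / b' ^ 2) ^ 2 + (v - v') ^ 2 / ω₀ ^ 2))))
          ^ ((N : ℝ) + lam * (N : ℝ) * ((N : ℝ) - 1))) := by
  set s : ℝ := sExp N lam with hs
  set G1 : ℝ := Greal N lam 1 with hG1def
  have hG1 : 0 < G1 := Greal_one_pos hlam
  set c0 : ℝ := m * ω₀ / hbar with hc0def
  have hc0 : 0 < c0 := by positivity
  -- norm integral is constant
  have normInt : ∀ b v : ℝ, 0 < b →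
      (∫ x : Fin N → ℝ, ‖Ψ b v x‖ ^ 2) = c0 ^ (-s) * G1 := by
    intro b v hb
    have point : ∀ x : Fin N → ℝ, ‖Ψ b v x‖ ^ 2
        = ((b ^ (-(N:ℝ)/2)) ^ 2 / ((b ^ lam) ^ (P N)) ^ 2)
            * (hh lam x * Real.exp (-(c0 / b ^ 2) * SS x)) := by
      intro x
      rw [hΨ b v hb x, norm_mul]
      have hnormI : ∀ t : ℝ, ‖Complex.exp (Complex.I * (t:ℂ))‖ = 1 := by
        intro t
        rw [Complex.norm_exp]
        simp [Complex.mul_re]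
      have hexp1 : ‖Complex.exp (Complex.I *
          ((m * v / (2 * hbar)) * (∑ k, (x k) ^ 2) : ℝ))‖ = 1 := hnormI _
      rw [hexp1, mul_one, Complex.norm_real, Real.norm_eq_abs, sq_abs,
        Jb_div hlam hb x]
      have hSx : (∑ k, (x k) ^ 2) = SS x := rfl
      rw [hSx]
      have hexp2 : (Real.exp (-(m * ω₀ / (2 * hbar)) * SS x / b ^ 2)) ^ 2
          = Real.exp (-(c0 / b ^ 2) * SS x) := by
        rw [← Real.exp_nat_mul]
        congr 1
        rw [hc0def]
        field_simp
        ring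
      rw [hh]
      calc (b ^ (-(N:ℝ)/2) * (Jb lam x / (b ^ lam) ^ (P N))
            * Real.exp (-(m * ω₀ / (2 * hbar)) * SS x / b ^ 2)) ^ 2
          = ((b ^ (-(N:ℝ)/2)) ^ 2 / ((b ^ lam) ^ (P N)) ^ 2)
            * (Jb lam x ^ 2 * (Real.exp (-(m * ω₀ / (2 * hbar)) * SS x / b ^ 2)) ^ 2) := by
            ring
        _ = _ := by rw [hexp2]
    simp only [point]
    rw [MeasureTheory.integral_const_mul]
    have hGr : (∫ x : Fin N → ℝ, hh lam x * Real.exp (-(c0 / b ^ 2) * SS x))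
        = Greal N lam (c0 / b ^ 2) := rfl
    rw [hGr, Greal_scale hlam (by positivity)]
    -- algebra
    have hb2 : (0:ℝ) < b ^ 2 := by positivity
    have e1 : (b ^ (-(N:ℝ)/2)) ^ 2 = b ^ (-(N:ℝ)) := by
      rw [← Real.rpow_natCast (b ^ (-(N:ℝ)/2)) 2, ← Real.rpow_mul hb.le]
      congr 1; ring
    have e2 : ((b ^ lam) ^ (P N)) ^ 2 = b ^ (lam * (2 * (P N : ℝ))) := by
      rw [← Real.rpow_natCast (b ^ lam) (P N), ← Real.rpow_mul hb.le,
        ← Real.rpow_natCast (b ^ (lam * (P N : ℝ))) 2, ← Real.rpow_mul hb.le]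
      congr 1; ring
    have e3 : (c0 / b ^ 2) ^ (-s) = c0 ^ (-s) / b ^ (2 * (-s)) := by
      rw [Real.div_rpow hc0.le hb2.le]
      congr 1
      rw [← Real.rpow_natCast b 2, ← Real.rpow_mul hb.le]
      norm_num
    have e4 : b ^ (-(N:ℝ)) / b ^ (lam * (2 * (P N : ℝ))) / b ^ (2 * (-s)) = 1 := by
      rw [← Real.rpow_sub hb, ← Real.rpow_sub hb]
      have : -(N:ℝ) - lam * (2 * (P N : ℝ)) - 2 * (-s) = 0 := by
        rw [hs, sExp]; ring
      rw [this, Real.rpow_zero]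
    calc (b ^ (-(N:ℝ)/2)) ^ 2 / ((b ^ lam) ^ (P N)) ^ 2 * ((c0 / b ^ 2) ^ (-s) * G1)
        = (b ^ (-(N:ℝ)) / b ^ (lam * (2 * (P N : ℝ))) / b ^ (2 * (-s))) * (c0 ^ (-s) * G1) := by
          rw [e1, e2, e3]
          ring
      _ = c0 ^ (-s) * G1 := by rw [e4, one_mul]
  refine ⟨fun b v b' v' hb hb' => by rw [normInt b v hb, normInt b' v' hb'], ?_⟩
  intro b v b' v' hb hb'
  set α : ℝ := (m * ω₀ / (2 * hbar)) * (1 / b ^ 2 + 1 / b' ^ 2) with hαdef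
  set β : ℝ := m * (v - v') / (2 * hbar) with hβdef
  have hα : 0 < α := by positivity
  set z : ℂ := (α : ℂ) + (β : ℂ) * Complex.I with hzdef
  have hzre : z.re = α := by simp [hzdef]
  set K2 : ℝ := b ^ (-(N:ℝ)/2) * b' ^ (-(N:ℝ)/2) / ((b ^ lam) ^ (P N) * (b' ^ lam) ^ (P N))
    with hK2def
  have hbl : 0 < (b ^ lam) ^ (P N) := pow_pos (Real.rpow_pos_of_pos hb lam) _
  have hbl' : 0 < (b' ^ lam) ^ (P N) := pow_pos (Real.rpow_pos_of_pos hb' lam) _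
  have hK2pos : 0 < K2 := by
    apply div_pos
    · exact mul_pos (Real.rpow_pos_of_pos hb _) (Real.rpow_pos_of_pos hb' _)
    · exact mul_pos hbl hbl'
  have hpoint : ∀ x : Fin N → ℝ, (starRingEnd ℂ) (Ψ b v x) * Ψ b' v' x
      = ((K2 : ℝ) : ℂ) * ((hh lam x : ℂ) * Complex.exp (-z * (SS x : ℂ))) := by
    intro x
    rw [hΨ b v hb x, hΨ b' v' hb' x]
    have hSx : (∑ k, (x k) ^ 2) = SS x := rfl
    set T : ℝ := m * v / (2 * hbar) * (∑ k, (x k) ^ 2) with hT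
    set T' : ℝ := m * v' / (2 * hbar) * (∑ k, (x k) ^ 2) with hT'
    set Rb : ℝ := b ^ (-(N:ℝ)/2)
      * (∏ i : Fin N, ∏ j ∈ univ.filter (fun j => i < j), |(x i - x j)/b| ^ lam)
      * Real.exp (-(m * ω₀ / (2*hbar)) * (∑ k, (x k) ^ 2) / b ^ 2) with hRb
    set Rb' : ℝ := b' ^ (-(N:ℝ)/2)
      * (∏ i : Fin N, ∏ j ∈ univ.filter (fun j => i < j), |(x i - x j)/b'| ^ lam)
      * Real.exp (-(m * ω₀ / (2*hbar)) * (∑ k, (x k) ^ 2) / b' ^ 2) with hRb'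
    have hreal : Rb * Rb' = K2 * (hh lam x * Real.exp (-α * SS x)) := by
      rw [hRb, hRb', Jb_div hlam hb x, Jb_div hlam hb' x, hSx]
      have hexp2 : Real.exp (-(m * ω₀ / (2*hbar)) * SS x / b ^ 2)
          * Real.exp (-(m * ω₀ / (2*hbar)) * SS x / b' ^ 2) = Real.exp (-α * SS x) := by
        rw [← Real.exp_add]; congr 1; rw [hαdef]; field_simp; ring
      calc b ^ (-(N:ℝ)/2) * (Jb lam x / (b ^ lam) ^ (P N))
            * Real.exp (-(m * ω₀ / (2*hbar)) * SS x / b ^ 2)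
          * (b' ^ (-(N:ℝ)/2) * (Jb lam x / (b' ^ lam) ^ (P N))
            * Real.exp (-(m * ω₀ / (2*hbar)) * SS x / b' ^ 2))
          = (b ^ (-(N:ℝ)/2) * b' ^ (-(N:ℝ)/2) / ((b ^ lam) ^ (P N) * (b' ^ lam) ^ (P N)))
            * (Jb lam x * Jb lam x)
            * (Real.exp (-(m * ω₀ / (2*hbar)) * SS x / b ^ 2)
              * Real.exp (-(m * ω₀ / (2*hbar)) * SS x / b' ^ 2)) := by
            field_simp
        _ = K2 * (hh lam x * Real.exp (-α * SS x)) := by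
            rw [hexp2, hK2def, hh, sq]; ring
    simp only [map_mul, Complex.conj_ofReal, ← Complex.exp_conj, Complex.conj_I]
    have hTT : T' - T = -β * SS x := by rw [hT, hT', hβdef, hSx]; field_simp; ring
    have hmerge : Complex.exp (-Complex.I * (T:ℂ)) * Complex.exp (Complex.I * (T':ℂ))
        = Complex.exp (((-β * SS x : ℝ) : ℂ) * Complex.I) := by
      rw [← Complex.exp_add, ← hTT]
      congr 1
      push_cast
      ring
    have hsplit : Complex.exp (-z * (SS x : ℂ))
        = ((Real.exp (-α * SS x) : ℝ) : ℂ)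
          * Complex.exp (((-β * SS x : ℝ) : ℂ) * Complex.I) := by
      rw [Complex.ofReal_exp, ← Complex.exp_add]
      congr 1
      rw [hzdef]
      push_cast
      ring
    calc ((Rb : ℝ) : ℂ) * Complex.exp (-Complex.I * (T:ℂ))
          * (((Rb' : ℝ) : ℂ) * Complex.exp (Complex.I * (T':ℂ)))
        = (((Rb * Rb' : ℝ) : ℝ) : ℂ)
          * (Complex.exp (-Complex.I * (T:ℂ)) * Complex.exp (Complex.I * (T':ℂ))) := by
          push_cast; ring
      _ = ((K2 : ℝ) : ℂ) * ((hh lam x : ℂ) * Complex.exp (-z * (SS x : ℂ))) := by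
          rw [hreal, hmerge, hsplit]
          push_cast
          ring
  have hnum : (∫ x : Fin N → ℝ, (starRingEnd ℂ) (Ψ b v x) * Ψ b' v' x)
      = ((K2:ℝ):ℂ) * FF N lam z := by
    simp only [hpoint]
    rw [MeasureTheory.integral_const_mul]
    rfl
  have hzre' : 0 < z.re := by rw [hzre]; exact hα
  have hnormF : ‖FF N lam z‖ = ‖z‖ ^ (-s) * G1 := FF_norm hlam hzre'
  set D : ℝ := (1 / b ^ 2 + 1 / b' ^ 2) ^ 2 + (v - v') ^ 2 / ω₀ ^ 2 with hDdef
  have hD : 0 < D := by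
    have h1 : 0 < (1/b^2 + 1/b'^2)^2 := pow_pos (by positivity) 2
    have h2 : 0 ≤ (v-v')^2/ω₀^2 := by positivity
    rw [hDdef]; linarith
  set A' : ℝ := (m * ω₀ / (2 * hbar)) * Real.sqrt D with hA'def
  have hA' : 0 < A' := mul_pos (by positivity) (Real.sqrt_pos.2 hD)
  have habsz : ‖z‖ = A' := by
    rw [hzdef, Complex.norm_add_mul_I,
      show α^2 + β^2 = (m * ω₀ / (2*hbar))^2 * D from by
        rw [hαdef, hβdef, hDdef]; field_simp,
      Real.sqrt_mul (sq_nonneg _), Real.sqrt_sq (by positivity)]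
  rw [hnum, normInt b v hb, normInt b' v' hb', norm_mul, Complex.norm_real,
    Real.norm_eq_abs, abs_of_pos hK2pos, hnormF, habsz]
  have hK2 : K2 = (b * b') ^ (-s) := by
    rw [hK2def, Real.mul_rpow hb.le hb'.le,
      show b ^ (-(N:ℝ)/2) * b' ^ (-(N:ℝ)/2) / ((b ^ lam) ^ (P N) * (b' ^ lam) ^ (P N))
        = (b ^ (-(N:ℝ)/2) / (b ^ lam) ^ (P N)) * (b' ^ (-(N:ℝ)/2) / (b' ^ lam) ^ (P N)) from by
          ring,
      rpow_div_helper hb N lam, rpow_div_helper hb' N lam, hs]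
  have hP2 : ((P N : ℝ)) * 2 = (N:ℝ) * ((N:ℝ) - 1) := by
    have h0 := P_mul_two N
    have h1 : ((P N * 2 : ℕ) : ℝ) = ((N * (N-1) : ℕ) : ℝ) := by exact_mod_cast h0
    push_cast [Nat.cast_sub (by omega : 1 ≤ N)] at h1
    simpa using h1
  have hexp2s : (N:ℝ) + lam * N * ((N:ℝ) - 1) = 2 * s := by
    rw [hs, sExp]
    linear_combination (-lam) * hP2
  rw [hexp2s]
  have hbb'A : (0:ℝ) < b * b' * A' := by positivity
  have hbase : m * ω₀ / (hbar * b * b' * A') = c0 / (b * b' * A') := by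
    rw [hc0def]; field_simp
  rw [hbase]
  have hx0 : (0:ℝ) < c0 / (b * b' * A') := by positivity
  have hsq : (c0 / (b * b' * A')) ^ ((2:ℝ) * s) = ((c0 / (b * b' * A')) ^ s) ^ 2 := by
    rw [mul_comm (2:ℝ) s, Real.rpow_mul hx0.le]
    norm_num
  rw [hsq]
  have hbaseeq : K2 * (A' ^ (-s) * G1) / (c0 ^ (-s) * G1) = (c0 / (b * b' * A')) ^ s := by
    rw [hK2, Real.div_rpow hc0.le hbb'A.le,
      Real.mul_rpow (by positivity : (0:ℝ) ≤ b*b') hA'.le,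
      Real.rpow_neg (by positivity : (0:ℝ) ≤ b*b'), Real.rpow_neg hA'.le,
      Real.rpow_neg hc0.le]
    have h1 : (b*b') ^ s ≠ 0 := (Real.rpow_pos_of_pos (by positivity) s).ne'
    have h2 : A' ^ s ≠ 0 := (Real.rpow_pos_of_pos hA' s).ne'
    have h3 : c0 ^ s ≠ 0 := (Real.rpow_pos_of_pos hc0 s).ne'
    field_simp
  calc (K2 * (A' ^ (-s) * G1)) ^ 2 / (c0 ^ (-s) * G1 * (c0 ^ (-s) * G1))
      = (K2 * (A' ^ (-s) * G1) / (c0 ^ (-s) * G1)) ^ 2 := by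
        rw [div_pow]; congr 1; ring
    _ = ((c0 / (b * b' * A')) ^ s) ^ 2 := by rw [hbaseeq]
end

section
/- Let N ≥ 2, m, ħ, ω₀ > 0 and c₀ ∈ ℝ. Let Γ : ℝ → ℝ be even and twice continuously differentiable on ℝ \ {0}, let b : ℝ → (0,∞) be twice differentiable, let Ω : ℝ → ℝ satisfy the Ermakov equation b̈(t) + Ω(t)²b(t) = ω₀²/b(t)³ for all t, and let τ : ℝ → ℝ be differentiable. Define Ψ(t,x) := b(t)^{−N/2} ∏_{i<j} exp( Γ( c₀ x_{ij} / b(t) ) ) · exp( ∑_k [ − mω₀ x_k²/(2ħ b(t)²) + i m ḃ(t) x_k²/(2ħ b(t)) ] + i N τ(t) ). Then for every t and every x : Fin N → ℝ with pairwise distinct coordinates, iħ ∂_t Ψ(t,x) = − (ħ²/2m) ∑_i ∂²_{x_i} Ψ(t,x) + V(t,x) · Ψ(t,x), where, with u_{ij} := c₀ x_{ij}/b(t) and g_{ij} := (c₀/b(t)) Γ′(u_{ij}), V(t,x) := (1/2) m Ω(t)² ∑_i x_i² + (ħ²/m) ∑_{i<j} [ (c₀/b(t))² Γ″(u_{ij})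 + g_{ij}² ] − ħ (ω₀/b(t)²) ∑_{i<j} g_{ij} x_{ij} − (ħ²/m) ∑_{i<j<k} ( g_{ij}g_{jk} + g_{ij}g_{ki} + g_{ki}g_{jk} ) − (1/2) N ħ ( 2τ̇(t) + ω₀/b(t)² ). -/
open Finset Complex

section aux
variable {Γ : ℝ → ℝ}

lemma deriv_odd_of_even (h : ∀ u, Γ (-u) = Γ u) : ∀ u, deriv Γ (-u) = -deriv Γ u := by
  intro u
  have h1 : Γ = fun v => Γ (-v) := funext fun v => (h v).symm
  have h2 : deriv Γ u = deriv (fun v => Γ (-v)) u := by rw [← h1]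
  rw [deriv_comp_neg] at h2
  linarith

lemma deriv2_even_of_even (h : ∀ u, Γ (-u) = Γ u) :
    ∀ u, deriv (deriv Γ) (-u) = deriv (deriv Γ) u := by
  have hodd := deriv_odd_of_even h
  intro u
  have h1 : deriv Γ = fun v => -(deriv Γ (-v)) := funext fun v => by rw [hodd, neg_neg]
  have h2 : deriv (deriv Γ) u = deriv (fun v => -(deriv Γ (-v))) u := by rw [← h1]
  rw [deriv.fun_neg, deriv_comp_neg, neg_neg] at h2
  exact h2.symm

/-- chain rule for `h (c * v r / d)` allowing `c = 0` (constant case). -/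
lemma gamma_comp' (h : ℝ → ℝ) (hd : ∀ u ≠ (0:ℝ), HasDerivAt h (deriv h u) u)
    (c d : ℝ) (hdne : d ≠ 0) {v : ℝ → ℝ} {v' s : ℝ}
    (hv : HasDerivAt v v' s) (hvs : v s ≠ 0) :
    HasDerivAt (fun r => h (c * v r / d)) (deriv h (c * v s / d) * (c * v' / d)) s := by
  rcases eq_or_ne c 0 with rfl | hc
  · simp only [zero_mul, zero_div, mul_zero]
    exact hasDerivAt_const s (h 0)
  · have hne : c * v s / d ≠ 0 := div_ne_zero (mul_ne_zero hc hvs) hdne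
    have hinner : HasDerivAt (fun r => c * v r / d) (c * v' / d) s := (hv.const_mul c).div_const d
    simpa [Function.comp_def] using (hd _ hne).comp s hinner

/-- chain rule for `h (c / w r)` allowing `c = 0`. -/
lemma gamma_comp_div (h : ℝ → ℝ) (hd : ∀ u ≠ (0:ℝ), HasDerivAt h (deriv h u) u)
    (c : ℝ) {w : ℝ → ℝ} {w' s : ℝ} (hw : HasDerivAt w w' s) (hws : w s ≠ 0) :
    HasDerivAt (fun r => h (c / w r)) (deriv h (c / w s) * (-(c * w') / w s ^ 2)) s := by
  rcases eq_or_ne c 0 with rfl | hc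
  · simp only [zero_div, zero_mul, neg_zero, mul_zero]
    exact hasDerivAt_const s (h 0)
  · have hne : c / w s ≠ 0 := div_ne_zero hc hws
    have hinner : HasDerivAt (fun r => c / w r) (-(c * w') / w s ^ 2) s := by
      have := (hasDerivAt_const s c).div hw hws
      simpa [Pi.div_def] using this
    simpa [Function.comp_def] using (hd _ hne).comp s hinner

end aux

section faux
variable {N : ℕ} {M : Type*} [AddCommMonoid M]

lemma ite_sum {α : Type*} (c : Prop) [Decidable c] (s : Finset α) (f : α → M) :
    (if c then ∑ k ∈ s, f k else 0) = ∑ k ∈ s, (if c then f k else 0) := by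
  split_ifs <;> simp

lemma ite_add6 (c : Prop) [Decidable c] (v1 v2 v3 v4 v5 v6 : M) :
    (if c then v1 + v2 + v3 + v4 + v5 + v6 else 0)
      = (if c then v1 else 0) + (if c then v2 else 0) + (if c then v3 else 0)
        + (if c then v4 else 0) + (if c then v5 else 0) + (if c then v6 else 0) := by
  split_ifs <;> simp

lemma split_ne (i : Fin N) (F : Fin N → M) :
    ∑ j ∈ univ.filter (fun j => j ≠ i), F j
      = (∑ j ∈ univ.filter (fun j => i < j), F j)
        + ∑ j ∈ univ.filter (fun j => j < i), F j := by
  rw [Finset.sum_filter, Finset.sum_filter, Finset.sum_filter, ← Finset.sum_add_distrib]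
  apply Finset.sum_congr rfl
  intro j _
  rcases lt_trichotomy i j with h|h|h
  · simp [h, h.ne', lt_asymm h]
  · subst h; simp
  · simp [h, h.ne, lt_asymm h]

lemma tri_swap (h : Fin N → Fin N → M) :
    ∑ i, ∑ j ∈ univ.filter (fun j => j < i), h i j
      = ∑ i, ∑ j ∈ univ.filter (fun j => i < j), h j i := by
  simp_rw [Finset.sum_filter]
  rw [Finset.sum_comm]

lemma offdiag_eq (h : Fin N → Fin N → M) :
    ∑ i, ∑ j ∈ univ.filter (fun j => j ≠ i), h i j
      = ∑ i, ∑ j ∈ univ.filter (fun j => i < j), (h i j + h j i) := by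
  calc ∑ i, ∑ j ∈ univ.filter (fun j => j ≠ i), h i j
      = ∑ i, ((∑ j ∈ univ.filter (fun j => i < j), h i j)
          + ∑ j ∈ univ.filter (fun j => j < i), h i j) :=
        Finset.sum_congr rfl fun i _ => split_ne i (h i)
    _ = (∑ i, ∑ j ∈ univ.filter (fun j => i < j), h i j)
          + ∑ i, ∑ j ∈ univ.filter (fun j => j < i), h i j := Finset.sum_add_distrib
    _ = (∑ i, ∑ j ∈ univ.filter (fun j => i < j), h i j)
          + ∑ i, ∑ j ∈ univ.filter (fun j => i < j), h j i := by rw [tri_swap]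
    _ = _ := by
        rw [← Finset.sum_add_distrib]
        exact Finset.sum_congr rfl fun i _ => Finset.sum_add_distrib.symm

lemma collect (i : Fin N) (F : Fin N → M) :
    ∑ p : Fin N, ∑ q ∈ univ.filter (fun q => p < q),
        (if p = i then F q else if q = i then F p else 0)
      = ∑ j ∈ univ.filter (fun j => j ≠ i), F j := by
  have step1 : ∀ p : Fin N, (∑ q ∈ univ.filter (fun q => p < q),
      (if p = i then F q else if q = i then F p else 0))
      = if p = i then (∑ q ∈ univ.filter (fun q => i < q), F q)
        else (if p < i then F p else 0) := by
    intro p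
    by_cases hp : p = i
    · subst hp; simp
    · simp only [if_neg hp]
      rw [Finset.sum_ite_eq' (univ.filter (fun q => p < q)) i (fun _ => F p)]
      simp [Finset.mem_filter]
  simp_rw [step1]
  rw [← Finset.add_sum_erase _ _ (Finset.mem_univ i)]
  simp only [if_pos rfl]
  rw [split_ne i F]
  congr 1
  have h2 : ∀ p ∈ univ.erase i,
      (if p = i then (∑ q ∈ univ.filter (fun q => i < q), F q)
        else if p < i then F p else 0) = (if p < i then F p else 0) :=
    fun p hp => if_neg (Finset.mem_erase.1 hp).1
  rw [Finset.sum_congr rfl h2, Finset.sum_erase _ (by simp), ← Finset.sum_filter]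

lemma ind_helper (a b c : Fin N) (v : M) :
    (if a < b ∧ b < c then v else 0) + (if a < c ∧ c < b then v else 0)
      + (if b < a ∧ a < c then v else 0) + (if c < a ∧ a < b then v else 0)
      + (if b < c ∧ c < a then v else 0) + (if c < b ∧ b < a then v else 0)
    = if b ≠ a ∧ c ≠ a ∧ c ≠ b then v else 0 := by
  split_ifs <;>
    first
      | (simp; done)
      | (exfalso
         simp only [Fin.lt_def, ne_eq, Fin.ext_iff, not_and, not_lt] at *
         omega)

section faux2
variable {N : ℕ} {M : Type*} [AddCommMonoid M]

lemma ite_sum' {α : Type*} (c : Prop) [Decidable c] (s : Finset α) (f : α → M) :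
    (if c then ∑ k ∈ s, f k else 0) = ∑ k ∈ s, (if c then f k else 0) := by
  split_ifs <;> simp

lemma ite_ite (c d : Prop) [Decidable c] [Decidable d] (v : M) :
    (if c then (if d then v else 0) else 0) = if c ∧ d then v else 0 := by
  by_cases hc : c <;> by_cases hd : d <;> simp [hc, hd]

lemma swap12 (g : Fin N → Fin N → Fin N → M) :
    ∑ i : Fin N, ∑ j : Fin N, ∑ k : Fin N, g i j k
      = ∑ j : Fin N, ∑ i : Fin N, ∑ k : Fin N, g i j k := Finset.sum_comm

lemma swap23 (g : Fin N → Fin N → Fin N → M) :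
    ∑ i : Fin N, ∑ j : Fin N, ∑ k : Fin N, g i j k
      = ∑ i : Fin N, ∑ k : Fin N, ∑ j : Fin N, g i j k :=
  Finset.sum_congr rfl fun _ _ => Finset.sum_comm

lemma ite_add6' (c : Prop) [Decidable c] (v1 v2 v3 v4 v5 v6 : M) :
    (if c then v1 + v2 + v3 + v4 + v5 + v6 else 0)
      = (if c then v1 else 0) + (if c then v2 else 0) + (if c then v3 else 0)
        + (if c then v4 else 0) + (if c then v5 else 0) + (if c then v6 else 0) := by
  split_ifs <;> simp

lemma ind_helper' (a b c : Fin N) (v : M) :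
    (if a < b ∧ b < c then v else 0) + (if a < c ∧ c < b then v else 0)
      + (if b < a ∧ a < c then v else 0) + (if c < a ∧ a < b then v else 0)
      + (if b < c ∧ c < a then v else 0) + (if c < b ∧ b < a then v else 0)
    = if b ≠ a ∧ c ≠ a ∧ c ≠ b then v else 0 := by
  split_ifs <;>
    first
      | (simp; done)
      | (exfalso
         simp only [Fin.lt_def, ne_eq, Fin.ext_iff, not_and, not_lt] at *
         omega)

lemma triple_expand (f : Fin N → Fin N → Fin N → M) :
    ∑ i : Fin N, ∑ j ∈ univ.filter (fun j => j ≠ i),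
        ∑ k ∈ univ.filter (fun k => k ≠ i ∧ k ≠ j), f i j k
      = ∑ i : Fin N, ∑ j ∈ univ.filter (fun j => i < j), ∑ k ∈ univ.filter (fun k => j < k),
          (f i j k + f i k j + f j i k + f j k i + f k i j + f k j i) := by
  have hT2 : (∑ i : Fin N, ∑ j : Fin N, ∑ k : Fin N, if i < j ∧ j < k then f i k j else 0)
      = ∑ i : Fin N, ∑ j : Fin N, ∑ k : Fin N, if i < k ∧ k < j then f i j k else 0 :=
    swap23 _
  have hT3 : (∑ i : Fin N, ∑ j : Fin N, ∑ k : Fin N, if i < j ∧ j < k then f j i k else 0)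
      = ∑ i : Fin N, ∑ j : Fin N, ∑ k : Fin N, if j < i ∧ i < k then f i j k else 0 :=
    swap12 _
  have hT4 : (∑ i : Fin N, ∑ j : Fin N, ∑ k : Fin N, if i < j ∧ j < k then f j k i else 0)
      = ∑ i : Fin N, ∑ j : Fin N, ∑ k : Fin N, if k < i ∧ i < j then f i j k else 0 :=
    (swap12 _).trans (swap23 _)
  have hT5 : (∑ i : Fin N, ∑ j : Fin N, ∑ k : Fin N, if i < j ∧ j < k then f k i j else 0)
      = ∑ i : Fin N, ∑ j : Fin N, ∑ k : Fin N, if j < k ∧ k < i then f i j k else 0 :=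
    (swap23 _).trans (swap12 _)
  have hT6 : (∑ i : Fin N, ∑ j : Fin N, ∑ k : Fin N, if i < j ∧ j < k then f k j i else 0)
      = ∑ i : Fin N, ∑ j : Fin N, ∑ k : Fin N, if k < j ∧ j < i then f i j k else 0 :=
    (swap23 _).trans ((swap12 _).trans (swap23 _))
  simp only [Finset.sum_filter, ite_sum', ite_ite, ite_add6', Finset.sum_add_distrib]
  rw [hT2, hT3, hT4, hT5, hT6]
  simp only [← Finset.sum_add_distrib]
  refine Finset.sum_congr rfl fun a _ => Finset.sum_congr rfl fun b _ =>
    Finset.sum_congr rfl fun c _ => ?_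
  exact (ind_helper' a b c (f a b c)).symm

end faux2
section sqoff
variable {N : ℕ} {R : Type*} [CommRing R]

lemma erase_filter_ne (i j : Fin N) :
    (univ.filter (fun q => q ≠ i)).erase j = univ.filter (fun k => k ≠ i ∧ k ≠ j) := by
  ext k
  simp only [Finset.mem_erase, Finset.mem_filter, Finset.mem_univ, true_and]
  tauto

lemma sq_offdiag (G : Fin N → Fin N → R) (hanti : ∀ i j, G j i = -G i j) :
    ∑ i, (∑ j ∈ univ.filter (fun j => j ≠ i), G i j) ^ 2
      = 2 * (∑ i, ∑ j ∈ univ.filter (fun j => i < j), (G i j) ^ 2)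
        - 2 * ∑ i, ∑ j ∈ univ.filter (fun j => i < j), ∑ k ∈ univ.filter (fun k => j < k),
            (G i j * G j k + G i j * G k i + G k i * G j k) := by
  have expand : ∀ i : Fin N, (∑ j ∈ univ.filter (fun j => j ≠ i), G i j) ^ 2
      = ∑ j ∈ univ.filter (fun j => j ≠ i),
          ((G i j) ^ 2 + ∑ k ∈ univ.filter (fun k => k ≠ i ∧ k ≠ j), G i j * G i k) := by
    intro i
    rw [sq, Finset.sum_mul_sum]
    refine Finset.sum_congr rfl fun j hj => ?_
    rw [← Finset.add_sum_erase _ (fun k => G i j * G i k) hj, erase_filter_ne, sq]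
  calc ∑ i, (∑ j ∈ univ.filter (fun j => j ≠ i), G i j) ^ 2
      = ∑ i, ∑ j ∈ univ.filter (fun j => j ≠ i),
          ((G i j) ^ 2 + ∑ k ∈ univ.filter (fun k => k ≠ i ∧ k ≠ j), G i j * G i k) :=
        Finset.sum_congr rfl fun i _ => expand i
    _ = (∑ i, ∑ j ∈ univ.filter (fun j => j ≠ i), (G i j) ^ 2)
        + ∑ i, ∑ j ∈ univ.filter (fun j => j ≠ i),
            ∑ k ∈ univ.filter (fun k => k ≠ i ∧ k ≠ j), G i j * G i k := by
        simp only [Finset.sum_add_distrib]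
    _ = (∑ i, ∑ j ∈ univ.filter (fun j => i < j), ((G i j) ^ 2 + (G j i) ^ 2))
        + ∑ i, ∑ j ∈ univ.filter (fun j => i < j), ∑ k ∈ univ.filter (fun k => j < k),
            (G i j * G i k + G i k * G i j + G j i * G j k + G j k * G j i
              + G k i * G k j + G k j * G k i) := by
        rw [offdiag_eq, triple_expand]
    _ = (∑ i, ∑ j ∈ univ.filter (fun j => i < j), 2 * (G i j) ^ 2)
        + ∑ i, ∑ j ∈ univ.filter (fun j => i < j), ∑ k ∈ univ.filter (fun k => j < k),
            (-2) * (G i j * G j k + G i j * G k i + G k i * G j k) := by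
        congr 1
        · refine Finset.sum_congr rfl fun i _ => Finset.sum_congr rfl fun j _ => ?_
          rw [hanti i j]; ring
        · refine Finset.sum_congr rfl fun i _ => Finset.sum_congr rfl fun j _ =>
            Finset.sum_congr rfl fun k _ => ?_
          rw [hanti k i, hanti i j, hanti j k]; ring
    _ = _ := by
        simp only [← Finset.mul_sum]
        ring
end sqoff

set_option maxHeartbeats 2000000 in
/-- General η = 0 theorem: the scale-invariant complex-valued time-dependent Jastrow ansatz
`Ψ(t,x) = b^{−N/2} ∏_{i<j} e^{Γ(c₀x_{ij}/b)} exp(∑_k[−mω₀x_k²/(2ħb²) + imḃx_k²/(2ħb)] + iNτ)`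
solves the time-dependent Schrödinger equation
`iħ ∂ₜΨ = −(ħ²/2m)∑ᵢ∂²ₓᵢΨ + V Ψ` with the parent potential `V` consisting of a harmonic
one-body term with frequency `Ω(t)` (given by the Ermakov equation), two-body and three-body
interaction terms, and a time-dependent constant. -/
theorem stmt_10 (N : ℕ) (hN : 2 ≤ N) (m hbar ω₀ : ℝ)
    (hm : 0 < m) (hhbar : 0 < hbar) (hω₀ : 0 < ω₀)
    (c₀ : ℝ) (Γ : ℝ → ℝ) (hΓeven : ∀ u, Γ (-u) = Γ u)
    (hΓ : ContDiffOn ℝ 2 Γ {0}ᶜ)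
    (b : ℝ → ℝ) (hbpos : ∀ t, 0 < b t)
    (hb : Differentiable ℝ b) (hb' : Differentiable ℝ (deriv b))
    (Ω : ℝ → ℝ)
    (hErmakov : ∀ t, deriv (deriv b) t + (Ω t) ^ 2 * b t = ω₀ ^ 2 / (b t) ^ 3)
    (τ : ℝ → ℝ) (hτ : Differentiable ℝ τ)
    (Ψ : ℝ → (Fin N → ℝ) → ℂ)
    (hΨ : ∀ t x, Ψ t x =
      (((b t) ^ (-(N : ℝ) / 2) *
        ∏ i : Fin N, ∏ j ∈ univ.filter (fun j => i < j),
          Real.exp (Γ (c₀ * (x i - x j) / b t)) : ℝ) : ℂ)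
      * Complex.exp (
          (((∑ k, - (m * ω₀ * (x k) ^ 2 / (2 * hbar * (b t) ^ 2))) : ℝ) : ℂ)
          + Complex.I * (((∑ k, m * deriv b t * (x k) ^ 2 / (2 * hbar * b t)) : ℝ) : ℂ)
          + Complex.I * (N : ℂ) * (τ t : ℂ)))
    (g : ℝ → (Fin N → ℝ) → Fin N → Fin N → ℝ)
    (hg : ∀ t x i j, g t x i j = (c₀ / b t) * deriv Γ (c₀ * (x i - x j) / b t))
    (V : ℝ → (Fin N → ℝ) → ℝ)
    (hV : ∀ t x, V t x =
      (1 / 2) * m * (Ω t) ^ 2 * ∑ i, (x i) ^ 2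
      + (hbar ^ 2 / m) * ∑ i : Fin N, ∑ j ∈ univ.filter (fun j => i < j),
          ((c₀ / b t) ^ 2 * deriv (deriv Γ) (c₀ * (x i - x j) / b t) + (g t x i j) ^ 2)
      - hbar * (ω₀ / (b t) ^ 2) * ∑ i : Fin N, ∑ j ∈ univ.filter (fun j => i < j),
          g t x i j * (x i - x j)
      - (hbar ^ 2 / m) * ∑ i : Fin N, ∑ j ∈ univ.filter (fun j => i < j),
          ∑ k ∈ univ.filter (fun k => j < k),
            (g t x i j * g t x j k + g t x i j * g t x k i + g t x k i * g t x j k)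
      - (1 / 2) * (N : ℝ) * hbar * (2 * deriv τ t + ω₀ / (b t) ^ 2)) :
    ∀ (t : ℝ) (x : Fin N → ℝ), (∀ i j : Fin N, i ≠ j → x i ≠ x j) →
      Complex.I * (hbar : ℂ) * deriv (fun s => Ψ s x) t
        = - ((hbar : ℂ) ^ 2 / (2 * (m : ℂ)))
            * ∑ i : Fin N, iteratedDeriv 2 (fun y => Ψ t (Function.update x i y)) (x i)
          + (V t x : ℂ) * Ψ t x := by
  intro t x hx
  -- Γ regularity facts
  have hΓ1 : ∀ u : ℝ, u ≠ 0 → HasDerivAt Γ (deriv Γ u) u := by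
    intro u hu
    have h1 : ContDiffAt ℝ 2 Γ u :=
      hΓ.contDiffAt (isOpen_compl_singleton.mem_nhds (by simpa using hu))
    exact (h1.differentiableAt (by norm_num)).hasDerivAt
  have hΓd : ContDiffOn ℝ 1 (deriv Γ) {0}ᶜ :=
    hΓ.deriv_of_isOpen isOpen_compl_singleton (by norm_num)
  have hΓ2 : ∀ u : ℝ, u ≠ 0 → HasDerivAt (deriv Γ) (deriv (deriv Γ) u) u := by
    intro u hu
    have h1 : ContDiffAt ℝ 1 (deriv Γ) u :=
      hΓd.contDiffAt (isOpen_compl_singleton.mem_nhds (by simpa using hu))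
    exact (h1.differentiableAt (by norm_num)).hasDerivAt
  have hodd := deriv_odd_of_even hΓeven
  have heven2 := deriv2_even_of_even hΓeven
  have hBpos : 0 < b t := hbpos t
  have hBne : b t ≠ 0 := ne_of_gt hBpos
  have hmne : m ≠ 0 := ne_of_gt hm
  have hhne : hbar ≠ 0 := ne_of_gt hhbar
  have hganti : ∀ i j : Fin N, g t x j i = -(g t x i j) := by
    intro i j
    rw [hg, hg]
    have harg : c₀ * (x j - x i) / b t = -(c₀ * (x i - x j) / b t) := by ring
    rw [harg, hodd]
    ring
  -- exponential form of Ψ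
  have hPsiExp : ∀ (s : ℝ) (y : Fin N → ℝ), Ψ s y =
      Complex.exp ((((-(N : ℝ)/2) * Real.log (b s) + (∑ p : Fin N, ∑ q ∈ univ.filter (fun q => p < q), Γ (c₀ * (y p - y q) / b s)) + ∑ k, -(m * ω₀ * (y k) ^ 2 / (2 * hbar * (b s) ^ 2)) : ℝ) : ℂ)
        + Complex.I * (((∑ k, m * deriv b s * (y k) ^ 2 / (2 * hbar * b s)) + (N : ℝ) * τ s : ℝ) : ℂ)) := by
    intro s y
    have hbs : (0:ℝ) < b s := hbpos s
    have hprodpos : (0:ℝ) < ∏ i : Fin N, ∏ j ∈ univ.filter (fun j => i < j),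
        Real.exp (Γ (c₀ * (y i - y j) / b s)) :=
      Finset.prod_pos fun i _ => Finset.prod_pos fun j _ => Real.exp_pos _
    have hrpos : (0:ℝ) < (b s) ^ (-(N : ℝ) / 2) *
        ∏ i : Fin N, ∏ j ∈ univ.filter (fun j => i < j),
          Real.exp (Γ (c₀ * (y i - y j) / b s)) :=
      mul_pos (Real.rpow_pos_of_pos hbs _) hprodpos
    have hlog : Real.log ((b s) ^ (-(N : ℝ) / 2) *
        ∏ i : Fin N, ∏ j ∈ univ.filter (fun j => i < j),
          Real.exp (Γ (c₀ * (y i - y j) / b s)))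
        = (-(N : ℝ) / 2) * Real.log (b s)
          + ∑ p : Fin N, ∑ q ∈ univ.filter (fun q => p < q), Γ (c₀ * (y p - y q) / b s) := by
      rw [Real.log_mul (ne_of_gt (Real.rpow_pos_of_pos hbs _)) (ne_of_gt hprodpos),
        Real.log_rpow hbs,
        Real.log_prod (fun i _ => ne_of_gt (Finset.prod_pos fun j _ => Real.exp_pos _))]
      congr 1
      refine Finset.sum_congr rfl fun i _ => ?_
      rw [Real.log_prod (fun j _ => ne_of_gt (Real.exp_pos _))]
      exact Finset.sum_congr rfl fun j _ => Real.log_exp _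
    rw [hΨ]
    rw [show ((((b s) ^ (-(N : ℝ) / 2) *
        ∏ i : Fin N, ∏ j ∈ univ.filter (fun j => i < j),
          Real.exp (Γ (c₀ * (y i - y j) / b s)) : ℝ)) : ℂ)
      = Complex.exp (↑(Real.log ((b s) ^ (-(N : ℝ) / 2) *
        ∏ i : Fin N, ∏ j ∈ univ.filter (fun j => i < j),
          Real.exp (Γ (c₀ * (y i - y j) / b s))))) from by
        rw [← Complex.ofReal_exp, Real.exp_log hrpos]]
    rw [← Complex.exp_add]
    congr 1
    rw [hlog]
    push_cast
    ring
  -- time derivative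
  have hdb := (hb t).hasDerivAt
  have hddb := (hb' t).hasDerivAt
  have hdτ := (hτ t).hasDerivAt
  have htime : HasDerivAt (fun s => Ψ s x)
      (Ψ t x * ((((-(N : ℝ)/2) * (deriv b t / b t) - (deriv b t / b t) * (∑ i : Fin N, ∑ j ∈ univ.filter (fun j => i < j), g t x i j * (x i - x j)) + (m * ω₀ * deriv b t / (hbar * (b t) ^ 3)) * (∑ k, (x k) ^ 2) : ℝ) : ℂ)
        + Complex.I * (((m * (deriv (deriv b) t * b t - (deriv b t) ^ 2) / (2 * hbar * (b t) ^ 2)) * (∑ k, (x k) ^ 2) + (N : ℝ) * deriv τ t : ℝ) : ℂ))) t := by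
    have h1 : HasDerivAt (fun s => (-(N : ℝ)/2) * Real.log (b s))
        ((-(N : ℝ)/2) * (deriv b t / b t)) t := (hdb.log hBne).const_mul _
    have h2 : HasDerivAt
        (fun s => ∑ p : Fin N, ∑ q ∈ univ.filter (fun q => p < q), Γ (c₀ * (x p - x q) / b s))
        (∑ p : Fin N, ∑ q ∈ univ.filter (fun q => p < q),
          deriv Γ (c₀ * (x p - x q) / b t) * (-(c₀ * (x p - x q) * deriv b t) / (b t) ^ 2)) t :=
      HasDerivAt.fun_sum fun p _ => HasDerivAt.fun_sum fun q _ =>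
        gamma_comp_div Γ hΓ1 (c₀ * (x p - x q)) hdb hBne
    have h3 : HasDerivAt (fun s => ∑ k, -(m * ω₀ * (x k) ^ 2 / (2 * hbar * (b s) ^ 2)))
        (∑ k, m * ω₀ * (x k) ^ 2 * deriv b t / (hbar * (b t) ^ 3)) t := by
      refine HasDerivAt.fun_sum fun k _ => ?_
      have hden : HasDerivAt (fun s => 2 * hbar * (b s) ^ 2)
          (2 * hbar * ((2 : ℕ) * (b t) ^ (2 - 1) * deriv b t)) t := (hdb.pow 2).const_mul _
      have h0 := ((hasDerivAt_const t (m * ω₀ * (x k) ^ 2)).div hden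
        (by positivity : (0:ℝ) < 2 * hbar * (b t) ^ 2).ne').neg
      refine h0.congr_deriv ?_
      field_simp
      ring
    have h4 : HasDerivAt (fun s => (∑ k, m * deriv b s * (x k) ^ 2 / (2 * hbar * b s)))
        (∑ k, m * (x k) ^ 2 * (deriv (deriv b) t * b t - deriv b t * deriv b t)
          / (2 * hbar * (b t) ^ 2)) t := by
      refine HasDerivAt.fun_sum fun k _ => ?_
      have h0 := ((hddb.const_mul m).mul_const ((x k) ^ 2)).div (hdb.const_mul (2 * hbar))
        (by positivity : (0:ℝ) < 2 * hbar * b t).ne'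
      refine h0.congr_deriv ?_
      field_simp
    have h5 : HasDerivAt (fun s => (N : ℝ) * τ s) ((N : ℝ) * deriv τ t) t := hdτ.const_mul _
    have hE := (h1.add h2).add h3
    have hF := h4.add h5
    have hphi := (hE.ofReal_comp).add ((hF.ofReal_comp).const_mul Complex.I)
    have hexp := hphi.cexp
    rw [show (fun s => Ψ s x) = _ from funext fun s => hPsiExp s x, hPsiExp t x]
    have e1 : (deriv b t / b t) * (∑ i : Fin N, ∑ j ∈ univ.filter (fun j => i < j), g t x i j * (x i - x j))
          = -(∑ p : Fin N, ∑ q ∈ univ.filter (fun q => p < q),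
              deriv Γ (c₀ * (x p - x q) / b t) * (-(c₀ * (x p - x q) * deriv b t) / (b t) ^ 2)) := by
        rw [Finset.mul_sum, ← Finset.sum_neg_distrib]
        refine Finset.sum_congr rfl fun p _ => ?_
        rw [Finset.mul_sum, ← Finset.sum_neg_distrib]
        refine Finset.sum_congr rfl fun q _ => ?_
        rw [hg]
        field_simp
    have e2 : (m * ω₀ * deriv b t / (hbar * (b t) ^ 3)) * (∑ k, (x k) ^ 2)
        = ∑ k, m * ω₀ * (x k) ^ 2 * deriv b t / (hbar * (b t) ^ 3) := by
      rw [Finset.mul_sum]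
      exact Finset.sum_congr rfl fun k _ => by ring
    have e3 : (m * (deriv (deriv b) t * b t - (deriv b t) ^ 2) / (2 * hbar * (b t) ^ 2)) * (∑ k, (x k) ^ 2)
        = ∑ k, m * (x k) ^ 2 * (deriv (deriv b) t * b t - deriv b t * deriv b t)
            / (2 * hbar * (b t) ^ 2) := by
      rw [Finset.mul_sum]
      exact Finset.sum_congr rfl fun k _ => by ring
    have hre_eq : ((-(N : ℝ)/2) * (deriv b t / b t) - (deriv b t / b t) * (∑ i : Fin N, ∑ j ∈ univ.filter (fun j => i < j), g t x i j * (x i - x j)) + (m * ω₀ * deriv b t / (hbar * (b t) ^ 3)) * (∑ k, (x k) ^ 2) : ℝ)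
        = ((-(N : ℝ)/2) * (deriv b t / b t)
          + ∑ p : Fin N, ∑ q ∈ univ.filter (fun q => p < q),
              deriv Γ (c₀ * (x p - x q) / b t) * (-(c₀ * (x p - x q) * deriv b t) / (b t) ^ 2))
          + ∑ k, m * ω₀ * (x k) ^ 2 * deriv b t / (hbar * (b t) ^ 3) := by
      rw [← e2, e1]
      ring
    have him_eq : ((m * (deriv (deriv b) t * b t - (deriv b t) ^ 2) / (2 * hbar * (b t) ^ 2)) * (∑ k, (x k) ^ 2) + (N : ℝ) * deriv τ t : ℝ)
        = (∑ k, m * (x k) ^ 2 * (deriv (deriv b) t * b t - deriv b t * deriv b t)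
            / (2 * hbar * (b t) ^ 2)) + (N : ℝ) * deriv τ t := by
      rw [← e3]
    rw [hre_eq, him_eq]
    exact hexp
  -- spatial second derivatives
  have hf2 : ∀ i : Fin N, iteratedDeriv 2 (fun y => Ψ t (Function.update x i y)) (x i)
      = Ψ t x * (((((((∑ j ∈ univ.filter (fun j => j ≠ i), deriv Γ (c₀ * (x i - x j) / b t) * (c₀ * 1 / b t)) - m * ω₀ * x i / (hbar * (b t) ^ 2)) : ℝ)) : ℂ) + Complex.I * ((m * deriv b t * x i / (hbar * b t) : ℝ) : ℂ)) ^ 2 + ((((∑ j ∈ univ.filter (fun j => j ≠ i), deriv (deriv Γ) (c₀ * (x i - x j) / b t) * (c₀ * 1 / b t) * (c₀ * 1 / b t)) - m * ω₀ / (hbar * (b t) ^ 2) : ℝ) : ℂ) + Complex.I * ((m * deriv b t / (hbar * b t) : ℝ) : ℂ))) := by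
    intro i
    -- pointwise reduction of the exponent after updating coordinate i
    have hREF : ∀ y : ℝ, (-(N : ℝ)/2) * Real.log (b t) + (∑ p : Fin N, ∑ q ∈ univ.filter (fun q => p < q), Γ (c₀ * ((Function.update x i y) p - (Function.update x i y) q) / b t)) + ∑ k, -(m * ω₀ * ((Function.update x i y) k) ^ 2 / (2 * hbar * (b t) ^ 2))
        = ((-(N : ℝ)/2) * Real.log (b t) + (∑ p : Fin N, ∑ q ∈ univ.filter (fun q => p < q), if p = i ∨ q = i then 0 else Γ (c₀ * (x p - x q) / b t)) + ∑ k ∈ univ.filter (fun k => k ≠ i), -(m * ω₀ * (x k) ^ 2 / (2 * hbar * (b t) ^ 2))) + (∑ j ∈ univ.filter (fun j => j ≠ i), Γ (c₀ * (y - x j) / b t)) - m * ω₀ * y ^ 2 / (2 * hbar * (b t) ^ 2) := by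
      intro y
      have hPAIR : (∑ p : Fin N, ∑ q ∈ univ.filter (fun q => p < q),
            Γ (c₀ * (Function.update x i y p - Function.update x i y q) / b t))
          = (∑ p : Fin N, ∑ q ∈ univ.filter (fun q => p < q),
              ((if p = i ∨ q = i then 0 else Γ (c₀ * (x p - x q) / b t))
                + (if p = i then Γ (c₀ * (y - x q) / b t)
                   else if q = i then Γ (c₀ * (y - x p) / b t) else 0))) := by
        refine Finset.sum_congr rfl fun p _ => Finset.sum_congr rfl fun q hq => ?_
        have hpq : p < q := (Finset.mem_filter.1 hq).2
        by_cases hp : p = i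
        · have hq' : q ≠ i := by
            intro e
            rw [hp, e] at hpq
            exact lt_irrefl i hpq
          have h1 : Function.update x i y p = y := by rw [hp, Function.update_self]
          have h2 : Function.update x i y q = x q := Function.update_of_ne hq' y x
          rw [h1, h2]
          simp [hp, hq']
        · by_cases hq' : q = i
          · have h1 : Function.update x i y p = x p := Function.update_of_ne hp y x
            have h2 : Function.update x i y q = y := by rw [hq', Function.update_self]
            rw [h1, h2]
            have harg : c₀ * (x p - y) / b t = -(c₀ * (y - x p) / b t) := by ring
            rw [harg, hΓeven]
            simp [hp, hq']
          · have h1 : Function.update x i y p = x p := Function.update_of_ne hp y x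
            have h2 : Function.update x i y q = x q := Function.update_of_ne hq' y x
            rw [h1, h2]
            simp [hp, hq']
      have hONE : (∑ k, -(m * ω₀ * (Function.update x i y k) ^ 2 / (2 * hbar * (b t) ^ 2)))
          = -(m * ω₀ * y ^ 2 / (2 * hbar * (b t) ^ 2))
            + ∑ k ∈ univ.filter (fun k => k ≠ i), -(m * ω₀ * (x k) ^ 2 / (2 * hbar * (b t) ^ 2)) := by
        rw [Finset.filter_ne', ← Finset.add_sum_erase _ _ (Finset.mem_univ i),
          Function.update_self]
        congr 1
        exact Finset.sum_congr rfl fun k hk => by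
          rw [Function.update_of_ne (Finset.mem_erase.1 hk).1]
      rw [hPAIR, hONE]
      simp only [Finset.sum_add_distrib]
      rw [collect i (fun j => Γ (c₀ * (y - x j) / b t))]
      ring
    have hIMF : ∀ y : ℝ, (∑ k, m * deriv b t * ((Function.update x i y) k) ^ 2 / (2 * hbar * b t)) + (N : ℝ) * τ t = ((∑ k ∈ univ.filter (fun k => k ≠ i), m * deriv b t * (x k) ^ 2 / (2 * hbar * b t)) + (N : ℝ) * τ t) + m * deriv b t * y ^ 2 / (2 * hbar * b t) := by
      intro y
      have hONE : (∑ k, m * deriv b t * (Function.update x i y k) ^ 2 / (2 * hbar * b t))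
          = m * deriv b t * y ^ 2 / (2 * hbar * b t)
            + ∑ k ∈ univ.filter (fun k => k ≠ i), m * deriv b t * (x k) ^ 2 / (2 * hbar * b t) := by
        rw [Finset.filter_ne', ← Finset.add_sum_erase _ _ (Finset.mem_univ i),
          Function.update_self]
        congr 1
        exact Finset.sum_congr rfl fun k hk => by
          rw [Function.update_of_ne (Finset.mem_erase.1 hk).1]
      rw [hONE]
      ring
    have hψeq : ∀ y : ℝ, Ψ t (Function.update x i y)
        = Complex.exp (((((-(N : ℝ)/2) * Real.log (b t) + (∑ p : Fin N, ∑ q ∈ univ.filter (fun q => p < q), if p = i ∨ q = i then 0 else Γ (c₀ * (x p - x q) / b t)) + ∑ k ∈ univ.filter (fun k => k ≠ i), -(m * ω₀ * (x k) ^ 2 / (2 * hbar * (b t) ^ 2))) + (∑ j ∈ univ.filter (fun j => j ≠ i), Γ (c₀ * (y - x j) / b t)) - m * ω₀ * y ^ 2 / (2 * hbar * (b t) ^ 2) : ℝ) : ℂ) + Complex.I * ((((∑ k ∈ univ.filter (fun k => k ≠ i), m * deriv b t * (x k) ^ 2 / (2 * hbar * b t)) + (N : ℝ) * τ t) + m *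 deriv b t * y ^ 2 / (2 * hbar * b t) : ℝ) : ℂ)) := by
      intro y
      rw [hPsiExp t (Function.update x i y), hREF y, hIMF y]
    -- first derivative on the good set
    have hphi' : ∀ y : ℝ, (∀ j : Fin N, j ≠ i → y ≠ x j) →
        HasDerivAt (fun z => (((((-(N : ℝ)/2) * Real.log (b t) + (∑ p : Fin N, ∑ q ∈ univ.filter (fun q => p < q), if p = i ∨ q = i then 0 else Γ (c₀ * (x p - x q) / b t)) + ∑ k ∈ univ.filter (fun k => k ≠ i), -(m * ω₀ * (x k) ^ 2 / (2 * hbar * (b t) ^ 2))) + (∑ j ∈ univ.filter (fun j => j ≠ i), Γ (c₀ * (z - x j) / b t)) - m * ω₀ * z ^ 2 / (2 * hbar * (b t) ^ 2) : ℝ) : ℂ) + Complex.I * ((((∑ k ∈ univ.filter (fun k => k ≠ i), m * deriv b t * (x k) ^ 2 / (2 * hbar * b t)) + (N : ℝ) * τ t) + m * deriv b t * z ^ 2 / (2 * hbar * b t) : ℝ) : ℂ)))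
          ((((∑ j ∈ univ.filter (fun j => j ≠ i), deriv Γ (c₀ * (y - x j) / b t) * (c₀ * 1 / b t)) - m * ω₀ * y / (hbar * (b t) ^ 2) : ℝ) : ℂ) + Complex.I * ((m * deriv b t * y / (hbar * b t) : ℝ) : ℂ)) y := by
      intro y hy
      have hre : HasDerivAt (fun z => (((-(N : ℝ)/2) * Real.log (b t) + (∑ p : Fin N, ∑ q ∈ univ.filter (fun q => p < q), if p = i ∨ q = i then 0 else Γ (c₀ * (x p - x q) / b t)) + ∑ k ∈ univ.filter (fun k => k ≠ i), -(m * ω₀ * (x k) ^ 2 / (2 * hbar * (b t) ^ 2))) + (∑ j ∈ univ.filter (fun j => j ≠ i), Γ (c₀ * (z - x j) / b t)) - m * ω₀ * z ^ 2 / (2 * hbar * (b t) ^ 2) : ℝ)) ((∑ j ∈ univ.filter (fun j => j ≠ i), deriv Γ (c₀ * (y - x j) / b t) * (c₀ * 1 / b t)) - m * ω₀ * y / (hbar * (b t) ^ 2) : ℝ) y := by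
        have hsum : HasDerivAt (fun z => (∑ j ∈ univ.filter (fun j => j ≠ i), Γ (c₀ * (z - x j) / b t)))
            ((∑ j ∈ univ.filter (fun j => j ≠ i), deriv Γ (c₀ * (y - x j) / b t) * (c₀ * 1 / b t)) : ℝ) y :=
          HasDerivAt.fun_sum fun j hj => gamma_comp' Γ hΓ1 c₀ (b t) hBne
            ((hasDerivAt_id' y).sub_const (x j))
            (sub_ne_zero.2 (hy j (Finset.mem_filter.1 hj).2))
        have h0 := ((hasDerivAt_const y (((-(N : ℝ)/2) * Real.log (b t) + (∑ p : Fin N, ∑ q ∈ univ.filter (fun q => p < q), if p = i ∨ q = i then 0 else Γ (c₀ * (x p - x q) / b t)) + ∑ k ∈ univ.filter (fun k => k ≠ i), -(m * ω₀ * (x k) ^ 2 / (2 * hbar * (b t) ^ 2))) : ℝ)).fun_add hsum).fun_sub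
          (((hasDerivAt_pow 2 y).const_mul (m * ω₀)).div_const (2 * hbar * (b t) ^ 2))
        refine h0.congr_deriv ?_
        field_simp
        ring
      have him : HasDerivAt (fun z => (((∑ k ∈ univ.filter (fun k => k ≠ i), m * deriv b t * (x k) ^ 2 / (2 * hbar * b t)) + (N : ℝ) * τ t) + m * deriv b t * z ^ 2 / (2 * hbar * b t) : ℝ)) (m * deriv b t * y / (hbar * b t) : ℝ) y := by
        have h0 := (hasDerivAt_const y (((∑ k ∈ univ.filter (fun k => k ≠ i), m * deriv b t * (x k) ^ 2 / (2 * hbar * b t)) + (N : ℝ) * τ t) : ℝ)).fun_add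
          (((hasDerivAt_pow 2 y).const_mul (m * deriv b t)).div_const (2 * hbar * b t))
        refine h0.congr_deriv ?_
        field_simp
        ring
      exact (hre.ofReal_comp).add ((him.ofReal_comp).const_mul Complex.I)
    have hxin : ∀ j : Fin N, j ≠ i → x i ≠ x j := fun j hj => hx i j (Ne.symm hj)
    -- second derivative at x i
    have hphi2 : HasDerivAt (fun z => ((((∑ j ∈ univ.filter (fun j => j ≠ i), deriv Γ (c₀ * (z - x j) / b t) * (c₀ * 1 / b t)) - m * ω₀ * z / (hbar * (b t) ^ 2) : ℝ) : ℂ) + Complex.I * ((m * deriv b t * z / (hbar * b t) : ℝ) : ℂ)))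
        ((((∑ j ∈ univ.filter (fun j => j ≠ i), deriv (deriv Γ) (c₀ * (x i - x j) / b t) * (c₀ * 1 / b t) * (c₀ * 1 / b t)) - m * ω₀ / (hbar * (b t) ^ 2) : ℝ) : ℂ) + Complex.I * ((m * deriv b t / (hbar * b t) : ℝ) : ℂ)) (x i) := by
      have hre2 : HasDerivAt (fun z => ((∑ j ∈ univ.filter (fun j => j ≠ i), deriv Γ (c₀ * (z - x j) / b t) * (c₀ * 1 / b t)) - m * ω₀ * z / (hbar * (b t) ^ 2) : ℝ)) ((∑ j ∈ univ.filter (fun j => j ≠ i), deriv (deriv Γ) (c₀ * (x i - x j) / b t) * (c₀ * 1 / b t) * (c₀ * 1 / b t)) - m * ω₀ / (hbar * (b t) ^ 2) : ℝ) (x i) := by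
        have hsum2 : HasDerivAt (fun z => ((∑ j ∈ univ.filter (fun j => j ≠ i), deriv Γ (c₀ * (z - x j) / b t) * (c₀ * 1 / b t)) : ℝ)) ((∑ j ∈ univ.filter (fun j => j ≠ i), deriv (deriv Γ) (c₀ * (x i - x j) / b t) * (c₀ * 1 / b t) * (c₀ * 1 / b t)) : ℝ) (x i) :=
          HasDerivAt.fun_sum fun j hj => (gamma_comp' (deriv Γ) hΓ2 c₀ (b t) hBne
            ((hasDerivAt_id' (x i)).sub_const (x j))
            (sub_ne_zero.2 (hxin j (Finset.mem_filter.1 hj).2))).mul_const (c₀ * 1 / b t)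
        have h0 := hsum2.fun_sub (((hasDerivAt_id' (x i)).const_mul (m * ω₀)).div_const (hbar * (b t) ^ 2))
        refine h0.congr_deriv ?_
        ring
      have him2 : HasDerivAt (fun z => (m * deriv b t * z / (hbar * b t) : ℝ)) (m * deriv b t / (hbar * b t) : ℝ) (x i) := by
        have h0 := ((hasDerivAt_id' (x i)).const_mul (m * deriv b t)).div_const (hbar * b t)
        refine h0.congr_deriv ?_
        ring
      exact (hre2.ofReal_comp).add ((him2.ofReal_comp).const_mul Complex.I)
    -- the neighbourhood where coordinates stay distinct
    have hU : ∀ᶠ y in nhds (x i), ∀ j : Fin N, j ≠ i → y ≠ x j := by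
      rw [Filter.eventually_all]
      intro j
      by_cases hj : j = i
      · exact Filter.Eventually.of_forall fun y hji => absurd hj hji
      · exact (eventually_ne_nhds (hx i j (Ne.symm hj))).mono fun y hy _ => hy
    have hev : deriv (fun z => Complex.exp (((((-(N : ℝ)/2) * Real.log (b t) + (∑ p : Fin N, ∑ q ∈ univ.filter (fun q => p < q), if p = i ∨ q = i then 0 else Γ (c₀ * (x p - x q) / b t)) + ∑ k ∈ univ.filter (fun k => k ≠ i), -(m * ω₀ * (x k) ^ 2 / (2 * hbar * (b t) ^ 2))) + (∑ j ∈ univ.filter (fun j => j ≠ i), Γ (c₀ * (z - x j) / b t)) - m * ω₀ * z ^ 2 / (2 * hbar * (b t) ^ 2) : ℝ) : ℂ)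
          + Complex.I * ((((∑ k ∈ univ.filter (fun k => k ≠ i), m * deriv b t * (x k) ^ 2 / (2 * hbar * b t)) + (N : ℝ) * τ t) + m * deriv b t * z ^ 2 / (2 * hbar * b t) : ℝ) : ℂ)))
        =ᶠ[nhds (x i)] fun z => Complex.exp (((((-(N : ℝ)/2) * Real.log (b t) + (∑ p : Fin N, ∑ q ∈ univ.filter (fun q => p < q), if p = i ∨ q = i then 0 else Γ (c₀ * (x p - x q) / b t)) + ∑ k ∈ univ.filter (fun k => k ≠ i), -(m * ω₀ * (x k) ^ 2 / (2 * hbar * (b t) ^ 2))) + (∑ j ∈ univ.filter (fun j => j ≠ i), Γ (c₀ * (z - x j) / b t)) - m * ω₀ * z ^ 2 / (2 * hbar * (b t) ^ 2) : ℝ) : ℂ)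
          + Complex.I * ((((∑ k ∈ univ.filter (fun k => k ≠ i), m * deriv b t * (x k) ^ 2 / (2 * hbar * b t)) + (N : ℝ) * τ t) + m * deriv b t * z ^ 2 / (2 * hbar * b t) : ℝ) : ℂ))
          * ((((∑ j ∈ univ.filter (fun j => j ≠ i), deriv Γ (c₀ * (z - x j) / b t) * (c₀ * 1 / b t)) - m * ω₀ * z / (hbar * (b t) ^ 2) : ℝ) : ℂ) + Complex.I * ((m * deriv b t * z / (hbar * b t) : ℝ) : ℂ)) :=
      hU.mono fun y hy => ((hphi' y hy).cexp).deriv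
    have hprod := ((hphi' (x i) hxin).cexp).fun_mul hphi2
    have hexpx : Complex.exp (((((-(N : ℝ)/2) * Real.log (b t) + (∑ p : Fin N, ∑ q ∈ univ.filter (fun q => p < q), if p = i ∨ q = i then 0 else Γ (c₀ * (x p - x q) / b t)) + ∑ k ∈ univ.filter (fun k => k ≠ i), -(m * ω₀ * (x k) ^ 2 / (2 * hbar * (b t) ^ 2))) + (∑ j ∈ univ.filter (fun j => j ≠ i), Γ (c₀ * (x i - x j) / b t)) - m * ω₀ * x i ^ 2 / (2 * hbar * (b t) ^ 2) : ℝ) : ℂ) + Complex.I * ((((∑ k ∈ univ.filter (fun k => k ≠ i), m * deriv b t * (x k) ^ 2 / (2 * hbar * b t)) + (N : ℝ) * τ t) + m * deriv b t * x i ^ 2 / (2 * hbar * b t) : ℝ) : ℂ))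
        = Ψ t x := by
      rw [← hψeq (x i), Function.update_eq_self]
    rw [show (fun y => Ψ t (Function.update x i y))
        = fun z => Complex.exp (((((-(N : ℝ)/2) * Real.log (b t) + (∑ p : Fin N, ∑ q ∈ univ.filter (fun q => p < q), if p = i ∨ q = i then 0 else Γ (c₀ * (x p - x q) / b t)) + ∑ k ∈ univ.filter (fun k => k ≠ i), -(m * ω₀ * (x k) ^ 2 / (2 * hbar * (b t) ^ 2))) + (∑ j ∈ univ.filter (fun j => j ≠ i), Γ (c₀ * (z - x j) / b t)) - m * ω₀ * z ^ 2 / (2 * hbar * (b t) ^ 2) : ℝ) : ℂ) + Complex.I * ((((∑ k ∈ univ.filter (fun k => k ≠ i), m * deriv b t * (x k) ^ 2 / (2 * hbar * b t)) + (N : ℝ) * τ t) + m * deriv b t * z ^ 2 / (2 * hbar * b t) : ℝ) : ℂ))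
      from funext fun y => hψeq y]
    rw [iteratedDeriv_succ, iteratedDeriv_one, Filter.EventuallyEq.deriv_eq hev, hprod.deriv,
      hexpx]
    ring

  -- final assembly
  rw [htime.deriv]
  have hsumQ : (∑ i : Fin N, iteratedDeriv 2 (fun y => Ψ t (Function.update x i y)) (x i))
      = Ψ t x * ∑ i : Fin N, (((((((∑ j ∈ univ.filter (fun j => j ≠ i), deriv Γ (c₀ * (x i - x j) / b t) * (c₀ * 1 / b t)) - m * ω₀ * x i / (hbar * (b t) ^ 2)) : ℝ)) : ℂ) + Complex.I * ((m * deriv b t * x i / (hbar * b t) : ℝ) : ℂ)) ^ 2 + ((((∑ j ∈ univ.filter (fun j => j ≠ i), deriv (deriv Γ) (c₀ * (x i - x j) / b t) * (c₀ * 1 / b t) * (c₀ * 1 / b t)) - m * ω₀ / (hbar * (b t) ^ 2) : ℝ) : ℂ) + Complex.I * ((m * deriv b t / (hbar * b t) : ℝ) : ℂ))) := by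
    rw [Finset.mul_sum]
    exact Finset.sum_congr rfl fun i _ => hf2 i
  rw [hsumQ]
  have hBneC : ((b t : ℝ) : ℂ) ≠ 0 := Complex.ofReal_ne_zero.2 hBne
  have hmneC : ((m : ℝ) : ℂ) ≠ 0 := Complex.ofReal_ne_zero.2 hmne
  have hhneC : ((hbar : ℝ) : ℂ) ≠ 0 := Complex.ofReal_ne_zero.2 hhne
  have hscalar : Complex.I * (hbar : ℂ) * ((((-(N : ℝ)/2) * (deriv b t / b t) - (deriv b t / b t) * (∑ i : Fin N, ∑ j ∈ univ.filter (fun j => i < j), g t x i j * (x i - x j)) + (m * ω₀ * deriv b t / (hbar * (b t) ^ 3)) * (∑ k, (x k) ^ 2) : ℝ) : ℂ) + Complex.I * (((m * (deriv (deriv b) t * b t - (deriv b t) ^ 2) / (2 * hbar * (b t) ^ 2)) * (∑ k, (x k) ^ 2) + (N : ℝ) * deriv τ t : ℝ) : ℂ))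
      = -((hbar : ℂ) ^ 2 / (2 * (m : ℂ))) * (∑ i : Fin N, (((((((∑ j ∈ univ.filter (fun j => j ≠ i), deriv Γ (c₀ * (x i - x j) / b t) * (c₀ * 1 / b t)) - m * ω₀ * x i / (hbar * (b t) ^ 2)) : ℝ)) : ℂ) + Complex.I * ((m * deriv b t * x i / (hbar * b t) : ℝ) : ℂ)) ^ 2 + ((((∑ j ∈ univ.filter (fun j => j ≠ i), deriv (deriv Γ) (c₀ * (x i - x j) / b t) * (c₀ * 1 / b t) * (c₀ * 1 / b t)) - m * ω₀ / (hbar * (b t) ^ 2) : ℝ) : ℂ) + Complex.I * ((m * deriv b t / (hbar * b t) : ℝ) : ℂ)))) + ((V t x : ℝ) : ℂ) := by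
    have key : ∀ (a bb c d : ℝ), (((a : ℝ) : ℂ) + Complex.I * ((bb : ℝ) : ℂ)) ^ 2
          + (((c : ℝ) : ℂ) + Complex.I * ((d : ℝ) : ℂ))
        = ((a ^ 2 - bb ^ 2 + c : ℝ) : ℂ) + Complex.I * ((2 * a * bb + d : ℝ) : ℂ) := by
      intro a bb c d
      push_cast
      linear_combination ((bb : ℝ) : ℂ) ^ 2 * Complex.I_sq
    have hQs : (∑ i : Fin N, (((((((∑ j ∈ univ.filter (fun j => j ≠ i), deriv Γ (c₀ * (x i - x j) / b t) * (c₀ * 1 / b t)) - m * ω₀ * x i / (hbar * (b t) ^ 2)) : ℝ)) : ℂ) + Complex.I * ((m * deriv b t * x i / (hbar * b t) : ℝ) : ℂ)) ^ 2 + ((((∑ j ∈ univ.filter (fun j => j ≠ i), deriv (deriv Γ) (c₀ * (x i - x j) / b t) * (c₀ * 1 / b t) * (c₀ * 1 / b t)) - m * ω₀ / (hbar * (b t) ^ 2) : ℝ) : ℂ) + Complex.I * ((m * deriv b t / (hbar * b t) : ℝ) : ℂ))))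
        = (((∑ i : Fin N, (((∑ j ∈ univ.filter (fun j => j ≠ i), deriv Γ (c₀ * (x i - x j) / b t) * (c₀ * 1 / b t)) - m * ω₀ * x i / (hbar * (b t) ^ 2)) ^ 2 - (m * deriv b t * x i / (hbar * b t)) ^ 2 + ((∑ j ∈ univ.filter (fun j => j ≠ i), deriv (deriv Γ) (c₀ * (x i - x j) / b t) * (c₀ * 1 / b t) * (c₀ * 1 / b t)) - m * ω₀ / (hbar * (b t) ^ 2)))) : ℝ) : ℂ)
          + Complex.I * (((∑ i : Fin N, (2 * ((∑ j ∈ univ.filter (fun j => j ≠ i), deriv Γ (c₀ * (x i - x j) / b t) * (c₀ * 1 / b t)) - m * ω₀ * x i / (hbar * (b t) ^ 2)) * (m * deriv b t * x i / (hbar * b t)) + (m * deriv b t / (hbar * b t)))) : ℝ) : ℂ) := by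
      rw [show (∑ i : Fin N, (((((((∑ j ∈ univ.filter (fun j => j ≠ i), deriv Γ (c₀ * (x i - x j) / b t) * (c₀ * 1 / b t)) - m * ω₀ * x i / (hbar * (b t) ^ 2)) : ℝ)) : ℂ) + Complex.I * ((m * deriv b t * x i / (hbar * b t) : ℝ) : ℂ)) ^ 2 + ((((∑ j ∈ univ.filter (fun j => j ≠ i), deriv (deriv Γ) (c₀ * (x i - x j) / b t) * (c₀ * 1 / b t) * (c₀ * 1 / b t)) - m * ω₀ / (hbar * (b t) ^ 2) : ℝ) : ℂ) + Complex.I * ((m * deriv b t / (hbar * b t) : ℝ) : ℂ))))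
          = ∑ i : Fin N, (((((((∑ j ∈ univ.filter (fun j => j ≠ i), deriv Γ (c₀ * (x i - x j) / b t) * (c₀ * 1 / b t)) - m * ω₀ * x i / (hbar * (b t) ^ 2)) ^ 2 - (m * deriv b t * x i / (hbar * b t)) ^ 2 + ((∑ j ∈ univ.filter (fun j => j ≠ i), deriv (deriv Γ) (c₀ * (x i - x j) / b t) * (c₀ * 1 / b t) * (c₀ * 1 / b t)) - m * ω₀ / (hbar * (b t) ^ 2))) : ℝ)) : ℂ) + Complex.I * (((2 * ((∑ j ∈ univ.filter (fun j => j ≠ i), deriv Γ (c₀ * (x i - x j) / b t) * (c₀ * 1 / b t)) - m * ω₀ * x i / (hbar * (b t) ^ 2)) * (m * deriv b t * x i / (hbar * b t)) + (m * deriv b t / (hbar * b t))) : ℝ) : ℂ))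
        from Finset.sum_congr rfl fun i _ => key _ _ _ _]
      rw [Finset.sum_add_distrib, ← Finset.mul_sum]
      push_cast
      ring
    -- real sum identities
    have GSg : ∀ i : Fin N, ((∑ j ∈ univ.filter (fun j => j ≠ i), deriv Γ (c₀ * (x i - x j) / b t) * (c₀ * 1 / b t))) = ∑ j ∈ univ.filter (fun j => j ≠ i), g t x i j :=
      fun i => Finset.sum_congr rfl fun j _ => by rw [hg]; ring
    have GS2g : ∀ i : Fin N, ((∑ j ∈ univ.filter (fun j => j ≠ i), deriv (deriv Γ) (c₀ * (x i - x j) / b t) * (c₀ * 1 / b t) * (c₀ * 1 / b t)))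
        = ∑ j ∈ univ.filter (fun j => j ≠ i), (c₀ / b t) ^ 2 * deriv (deriv Γ) (c₀ * (x i - x j) / b t) :=
      fun i => Finset.sum_congr rfl fun j _ => by ring
    have hsq : (∑ i : Fin N, (∑ j ∈ univ.filter (fun j => j ≠ i), g t x i j) ^ 2)
        = 2 * (∑ i : Fin N, ∑ j ∈ univ.filter (fun j => i < j), (g t x i j) ^ 2) - 2 * (∑ i : Fin N, ∑ j ∈ univ.filter (fun j => i < j), ∑ k ∈ univ.filter (fun k => j < k), (g t x i j * g t x j k + g t x i j * g t x k i + g t x k i * g t x j k)) := sq_offdiag (g t x) hganti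
    have hlin : (∑ i : Fin N, (∑ j ∈ univ.filter (fun j => j ≠ i), g t x i j) * x i) = (∑ i : Fin N, ∑ j ∈ univ.filter (fun j => i < j), g t x i j * (x i - x j)) := by
      rw [show (∑ i : Fin N, (∑ j ∈ univ.filter (fun j => j ≠ i), g t x i j) * x i)
          = ∑ i : Fin N, ∑ j ∈ univ.filter (fun j => j ≠ i), g t x i j * x i
        from Finset.sum_congr rfl fun i _ => Finset.sum_mul _ _ _]
      rw [offdiag_eq]
      exact Finset.sum_congr rfl fun i _ => Finset.sum_congr rfl fun j _ => by
        rw [hganti i j]; ring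
    have hgam2 : (∑ i : Fin N, ∑ j ∈ univ.filter (fun j => j ≠ i),
          (c₀ / b t) ^ 2 * deriv (deriv Γ) (c₀ * (x i - x j) / b t))
        = 2 * (∑ i : Fin N, ∑ j ∈ univ.filter (fun j => i < j), (c₀ / b t) ^ 2 * deriv (deriv Γ) (c₀ * (x i - x j) / b t)) := by
      rw [offdiag_eq]
      rw [show (∑ i : Fin N, ∑ j ∈ univ.filter (fun j => i < j),
            ((c₀ / b t) ^ 2 * deriv (deriv Γ) (c₀ * (x i - x j) / b t)
              + (c₀ / b t) ^ 2 * deriv (deriv Γ) (c₀ * (x j - x i) / b t)))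
          = ∑ i : Fin N, ∑ j ∈ univ.filter (fun j => i < j),
              2 * ((c₀ / b t) ^ 2 * deriv (deriv Γ) (c₀ * (x i - x j) / b t))
        from Finset.sum_congr rfl fun i _ => Finset.sum_congr rfl fun j _ => by
          rw [show c₀ * (x j - x i) / b t = -(c₀ * (x i - x j) / b t) from by ring, heven2]
          ring]
      simp only [← Finset.mul_sum]
    have hSR : (∑ i : Fin N, (((∑ j ∈ univ.filter (fun j => j ≠ i), deriv Γ (c₀ * (x i - x j) / b t) * (c₀ * 1 / b t)) - m * ω₀ * x i / (hbar * (b t) ^ 2)) ^ 2 - (m * deriv b t * x i / (hbar * b t)) ^ 2 + ((∑ j ∈ univ.filter (fun j => j ≠ i), deriv (deriv Γ) (c₀ * (x i - x j) / b t) * (c₀ * 1 / b t) * (c₀ * 1 / b t)) - m * ω₀ / (hbar * (b t) ^ 2))))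
        = (2 * (∑ i : Fin N, ∑ j ∈ univ.filter (fun j => i < j), (g t x i j) ^ 2) - 2 * (∑ i : Fin N, ∑ j ∈ univ.filter (fun j => i < j), ∑ k ∈ univ.filter (fun k => j < k), (g t x i j * g t x j k + g t x i j * g t x k i + g t x k i * g t x j k)))
          - (2 * m * ω₀ / (hbar * (b t) ^ 2)) * (∑ i : Fin N, ∑ j ∈ univ.filter (fun j => i < j), g t x i j * (x i - x j))
          + ((m * ω₀ / (hbar * (b t) ^ 2)) ^ 2 - (m * deriv b t / (hbar * b t)) ^ 2) * (∑ k, (x k) ^ 2)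
          + 2 * (∑ i : Fin N, ∑ j ∈ univ.filter (fun j => i < j), (c₀ / b t) ^ 2 * deriv (deriv Γ) (c₀ * (x i - x j) / b t)) - (N : ℝ) * (m * ω₀ / (hbar * (b t) ^ 2)) := by
      have hpt : ∀ i : Fin N, (((∑ j ∈ univ.filter (fun j => j ≠ i), deriv Γ (c₀ * (x i - x j) / b t) * (c₀ * 1 / b t)) - m * ω₀ * x i / (hbar * (b t) ^ 2)) ^ 2 - (m * deriv b t * x i / (hbar * b t)) ^ 2 + ((∑ j ∈ univ.filter (fun j => j ≠ i), deriv (deriv Γ) (c₀ * (x i - x j) / b t) * (c₀ * 1 / b t) * (c₀ * 1 / b t)) - m * ω₀ / (hbar * (b t) ^ 2)))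
          = (∑ j ∈ univ.filter (fun j => j ≠ i), g t x i j) ^ 2
            - (2 * m * ω₀ / (hbar * (b t) ^ 2)) * ((∑ j ∈ univ.filter (fun j => j ≠ i), g t x i j) * x i)
            + ((m * ω₀ / (hbar * (b t) ^ 2)) ^ 2 - (m * deriv b t / (hbar * b t)) ^ 2) * (x i) ^ 2
            + (∑ j ∈ univ.filter (fun j => j ≠ i), (c₀ / b t) ^ 2 * deriv (deriv Γ) (c₀ * (x i - x j) / b t))
            - m * ω₀ / (hbar * (b t) ^ 2) := by
        intro i
        rw [GSg i, GS2g i]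
        field_simp
        ring
      have hq2 : (∑ i : Fin N, (2 * m * ω₀ / (hbar * (b t) ^ 2)) * ((∑ j ∈ univ.filter (fun j => j ≠ i), g t x i j) * x i))
          = (2 * m * ω₀ / (hbar * (b t) ^ 2)) * ∑ i : Fin N, ((∑ j ∈ univ.filter (fun j => j ≠ i), g t x i j) * x i) :=
        (Finset.mul_sum _ _ _).symm
      have hr2 : (∑ i : Fin N, ((m * ω₀ / (hbar * (b t) ^ 2)) ^ 2 - (m * deriv b t / (hbar * b t)) ^ 2) * (x i) ^ 2)
          = ((m * ω₀ / (hbar * (b t) ^ 2)) ^ 2 - (m * deriv b t / (hbar * b t)) ^ 2) * ∑ i : Fin N, (x i) ^ 2 :=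
        (Finset.mul_sum _ _ _).symm
      have ht2 : (∑ _i : Fin N, m * ω₀ / (hbar * (b t) ^ 2)) = (N : ℝ) * (m * ω₀ / (hbar * (b t) ^ 2)) := by
        simp [Finset.sum_const, Finset.card_univ, nsmul_eq_mul]
      rw [Finset.sum_congr rfl fun i _ => hpt i]
      simp only [Finset.sum_add_distrib, Finset.sum_sub_distrib]
      rw [hsq, hq2, hlin, hr2, hgam2, ht2]
      simp only [Finset.sum_add_distrib]
    have hSI : (∑ i : Fin N, (2 * ((∑ j ∈ univ.filter (fun j => j ≠ i), deriv Γ (c₀ * (x i - x j) / b t) * (c₀ * 1 / b t)) - m * ω₀ * x i / (hbar * (b t) ^ 2)) * (m * deriv b t * x i / (hbar * b t)) + (m * deriv b t / (hbar * b t))))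
        = 2 * (m * deriv b t / (hbar * b t)) * (∑ i : Fin N, ∑ j ∈ univ.filter (fun j => i < j), g t x i j * (x i - x j))
          - 2 * (m * ω₀ / (hbar * (b t) ^ 2)) * (m * deriv b t / (hbar * b t)) * (∑ k, (x k) ^ 2)
          + (N : ℝ) * (m * deriv b t / (hbar * b t)) := by
      have hpt : ∀ i : Fin N, (2 * ((∑ j ∈ univ.filter (fun j => j ≠ i), deriv Γ (c₀ * (x i - x j) / b t) * (c₀ * 1 / b t)) - m * ω₀ * x i / (hbar * (b t) ^ 2)) * (m * deriv b t * x i / (hbar * b t)) + (m * deriv b t / (hbar * b t)))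
          = 2 * (m * deriv b t / (hbar * b t)) * ((∑ j ∈ univ.filter (fun j => j ≠ i), g t x i j) * x i)
            - 2 * (m * ω₀ / (hbar * (b t) ^ 2)) * (m * deriv b t / (hbar * b t)) * (x i) ^ 2
            + (m * deriv b t / (hbar * b t)) := by
        intro i
        rw [GSg i]
        field_simp
      have hq2 : (∑ i : Fin N, 2 * (m * deriv b t / (hbar * b t)) * ((∑ j ∈ univ.filter (fun j => j ≠ i), g t x i j) * x i))
          = 2 * (m * deriv b t / (hbar * b t)) * ∑ i : Fin N, ((∑ j ∈ univ.filter (fun j => j ≠ i), g t x i j) * x i) :=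
        (Finset.mul_sum _ _ _).symm
      have hr2 : (∑ i : Fin N, 2 * (m * ω₀ / (hbar * (b t) ^ 2)) * (m * deriv b t / (hbar * b t)) * (x i) ^ 2)
          = 2 * (m * ω₀ / (hbar * (b t) ^ 2)) * (m * deriv b t / (hbar * b t)) * ∑ i : Fin N, (x i) ^ 2 :=
        (Finset.mul_sum _ _ _).symm
      have ht2 : (∑ _i : Fin N, m * deriv b t / (hbar * b t)) = (N : ℝ) * (m * deriv b t / (hbar * b t)) := by
        simp [Finset.sum_const, Finset.card_univ, nsmul_eq_mul]
      rw [Finset.sum_congr rfl fun i _ => hpt i]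
      simp only [Finset.sum_add_distrib, Finset.sum_sub_distrib]
      rw [hq2, hlin, hr2, ht2]
    have hB2 : deriv (deriv b) t = ω₀ ^ 2 / (b t) ^ 3 - (Ω t) ^ 2 * b t := by
      have := hErmakov t
      linarith
    have hC : ∀ (p q r s : ℝ), p = r → q = s →
        ((p : ℝ) : ℂ) + Complex.I * ((q : ℝ) : ℂ) = ((r : ℝ) : ℂ) + Complex.I * ((s : ℝ) : ℂ) :=
      fun p q r s h1 h2 => by rw [h1, h2]
    calc Complex.I * (hbar : ℂ) * ((((-(N : ℝ)/2) * (deriv b t / b t) - (deriv b t / b t) * (∑ i : Fin N, ∑ j ∈ univ.filter (fun j => i < j), g t x i j * (x i - x j)) + (m * ω₀ * deriv b t / (hbar * (b t) ^ 3)) * (∑ k, (x k) ^ 2) : ℝ) : ℂ) + Complex.I * (((m * (deriv (deriv b) t * b t - (deriv b t) ^ 2) / (2 * hbar * (b t) ^ 2)) * (∑ k, (x k) ^ 2) + (N : ℝ) * deriv τ t : ℝ) : ℂ))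
        = ((-(hbar * ((m * (deriv (deriv b) t * b t - (deriv b t) ^ 2) / (2 * hbar * (b t) ^ 2)) * (∑ k, (x k) ^ 2) + (N : ℝ) * deriv τ t)) : ℝ) : ℂ) + Complex.I * ((hbar * ((-(N : ℝ)/2) * (deriv b t / b t) - (deriv b t / b t) * (∑ i : Fin N, ∑ j ∈ univ.filter (fun j => i < j), g t x i j * (x i - x j)) + (m * ω₀ * deriv b t / (hbar * (b t) ^ 3)) * (∑ k, (x k) ^ 2)) : ℝ) : ℂ) := by
          simp only [Complex.ofReal_neg, Complex.ofReal_mul]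
          linear_combination ((hbar : ℂ) * ((((m * (deriv (deriv b) t * b t - (deriv b t) ^ 2) / (2 * hbar * (b t) ^ 2)) * (∑ k, (x k) ^ 2) + (N : ℝ) * deriv τ t) : ℝ) : ℂ)) * Complex.I_sq
      _ = ((-(hbar ^ 2 / (2 * m)) * (∑ i : Fin N, (((∑ j ∈ univ.filter (fun j => j ≠ i), deriv Γ (c₀ * (x i - x j) / b t) * (c₀ * 1 / b t)) - m * ω₀ * x i / (hbar * (b t) ^ 2)) ^ 2 - (m * deriv b t * x i / (hbar * b t)) ^ 2 + ((∑ j ∈ univ.filter (fun j => j ≠ i), deriv (deriv Γ) (c₀ * (x i - x j) / b t) * (c₀ * 1 / b t) * (c₀ * 1 / b t)) - m * ω₀ / (hbar * (b t) ^ 2)))) + ((1 / 2) * m * (Ω t) ^ 2 * (∑ i, (x i) ^ 2) + (hbar ^ 2 / m) * (∑ i : Fin N, ∑ j ∈ univ.filter (fun j => i < j), ((c₀ / b t) ^ 2 * deriv (deriv Γ) (c₀ * (x i - x j) / b t) + (g t x i j) ^ 2)) - hbar * (ω₀ / (b t) ^ 2) * (∑ i : Fin N, ∑ j ∈ univ.filter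 (fun j => i < j), g t x i j * (x i - x j)) - (hbar ^ 2 / m) * (∑ i : Fin N, ∑ j ∈ univ.filter (fun j => i < j), ∑ k ∈ univ.filter (fun k => j < k), (g t x i j * g t x j k + g t x i j * g t x k i + g t x k i * g t x j k)) - (1 / 2) * (N : ℝ) * hbar * (2 * deriv τ t + ω₀ / (b t) ^ 2)) : ℝ) : ℂ)
          + Complex.I * ((-(hbar ^ 2 / (2 * m)) * (∑ i : Fin N, (2 * ((∑ j ∈ univ.filter (fun j => j ≠ i), deriv Γ (c₀ * (x i - x j) / b t) * (c₀ * 1 / b t)) - m * ω₀ * x i / (hbar * (b t) ^ 2)) * (m * deriv b t * x i / (hbar * b t)) + (m * deriv b t / (hbar * b t)))) : ℝ) : ℂ) := by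
          refine hC _ _ _ _ ?_ ?_
          · rw [hSR, hB2]
            simp only [Finset.sum_add_distrib]
            field_simp
            ring
          · rw [hSI]
            field_simp
            ring
      _ = -((hbar : ℂ) ^ 2 / (2 * (m : ℂ))) * (∑ i : Fin N, (((((((∑ j ∈ univ.filter (fun j => j ≠ i), deriv Γ (c₀ * (x i - x j) / b t) * (c₀ * 1 / b t)) - m * ω₀ * x i / (hbar * (b t) ^ 2)) : ℝ)) : ℂ) + Complex.I * ((m * deriv b t * x i / (hbar * b t) : ℝ) : ℂ)) ^ 2 + ((((∑ j ∈ univ.filter (fun j => j ≠ i), deriv (deriv Γ) (c₀ * (x i - x j) / b t) * (c₀ * 1 / b t) * (c₀ * 1 / b t)) - m * ω₀ / (hbar * (b t) ^ 2) : ℝ) : ℂ) + Complex.I * ((m * deriv b t / (hbar * b t) : ℝ) : ℂ)))) + ((V t x : ℝ) : ℂ) := by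
          rw [hQs, hV t x]
          push_cast
          ring
  linear_combination (Ψ t x) * hscalar
end faux
end
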